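/- arXiv:2103.04079 — 3 statements merged into one kernel-verified Lean document; each statement's English description precedes it below -/
import Mathlib

section
/- For every nondeterministic input-driven pushdown automaton A = (Σ, Q, Γ, Q₀, δ, F) over an alphabet Σ = Σ₊₁ ∪ Σ₋₁ ∪ Σ₀, there exists a deterministic input-driven pushdown automaton B with set of states Q' = 2^{Q×Q} (the set of all binary relations on Q) and stack alphabet Γ' = Σ₊₁ × 2^{Q×Q} that recognizes the same language: L(B) = L(A). In particular, every n-state NIDPDA is simulated by a DIDPDA with 2^{n²} states and |Σ₊₁|·2^{n²} stack symbols. -/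
/-- Classification of input symbols: left brackets (calls), right brackets
(returns) and neutral (internal) symbols. -/
inductive SymbolKind : Type
  | call | ret | int
  deriving DecidableEq

/-- A nondeterministic input-driven pushdown automaton (NIDPDA) over an
alphabet `A` (whose partition into left brackets, right brackets and
neutral symbols is given by a labelling `A → SymbolKind`), with state
set `Q`, stack alphabet `Γ`, initial states `init`, accepting states
`final`, and transition functions: `δint` for neutral symbols, `δcall`
for left brackets (pushing one stack symbol), and `δret` for right
brackets (popping one stack symbol, with `none` used on the empty
stack, in which case the stack stays empty). -/
structure NIDPDA (A Q Γ : Type) where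
  init : Set Q
  final : Set Q
  δint : A → Q → Set Q
  δcall : A → Q → Set (Q × Γ)
  δret : A → Option Γ → Q → Set Q

/-- Configurations (state, stack contents) reachable after reading the
first `i` symbols of `w`, starting in an initial state with the empty
stack. -/
inductive NIDPDA.Reach {A Q Γ : Type} (lab : A → SymbolKind) (M : NIDPDA A Q Γ)
    (w : List A) : ℕ → Q × List Γ → Prop
  | start {q : Q} : q ∈ M.init → NIDPDA.Reach lab M w 0 (q, [])
  | int {i : ℕ} {q q' : Q} {γ : List Γ} {a : A} :
      NIDPDA.Reach lab M w i (q, γ) → w[i]? = some a → lab a = SymbolKind.int →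
      q' ∈ M.δint a q → NIDPDA.Reach lab M w (i + 1) (q', γ)
  | call {i : ℕ} {q q' : Q} {γ : List Γ} {s : Γ} {a : A} :
      NIDPDA.Reach lab M w i (q, γ) → w[i]? = some a → lab a = SymbolKind.call →
      (q', s) ∈ M.δcall a q → NIDPDA.Reach lab M w (i + 1) (q', s :: γ)
  | ret {i : ℕ} {q q' : Q} {γ : List Γ} {s : Γ} {a : A} :
      NIDPDA.Reach lab M w i (q, s :: γ) → w[i]? = some a → lab a = SymbolKind.ret →
      q' ∈ M.δret a (some s) q → NIDPDA.Reach lab M w (i + 1) (q', γ)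
  | retEmpty {i : ℕ} {q q' : Q} {a : A} :
      NIDPDA.Reach lab M w i (q, []) → w[i]? = some a → lab a = SymbolKind.ret →
      q' ∈ M.δret a none q → NIDPDA.Reach lab M w (i + 1) (q', [])

/-- A string is accepted if some computation reads it completely and
ends in an accepting state, with any stack contents. -/
def NIDPDA.Accepts {A Q Γ : Type} (lab : A → SymbolKind) (M : NIDPDA A Q Γ)
    (w : List A) : Prop :=
  ∃ (q : Q) (γ : List Γ), NIDPDA.Reach lab M w w.length (q, γ) ∧ q ∈ M.final

/-- The language recognized by the automaton. -/
def NIDPDA.Language {A Q Γ : Type} (lab : A → SymbolKind) (M : NIDPDA A Q Γ) :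
    Set (List A) :=
  {w | NIDPDA.Accepts lab M w}

/-- An input-driven pushdown automaton is deterministic (a DIDPDA) if it
has a unique initial state and every value of every transition function
has at most one element. -/
def NIDPDA.Deterministic {A Q Γ : Type} (M : NIDPDA A Q Γ) : Prop :=
  (∃ q₀ : Q, M.init = {q₀}) ∧
  (∀ a q, (M.δint a q).Subsingleton) ∧
  (∀ a q, (M.δcall a q).Subsingleton) ∧
  (∀ a s q, (M.δret a s q).Subsingleton)

namespace Det

variable {A Q Γ : Type} (lab : A → SymbolKind) (M : NIDPDA A Q Γ)

/-- possible states of `M` at the start of the current segment, given the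
deterministic automaton's stack `σ` and a candidate stack `γ` of `M`. -/
def Start : List ({a : A // lab a = SymbolKind.call} × Set (Q × Q)) → List Γ → Q → Prop
  | [], [], p => p ∈ M.init
  | (a, T) :: σ, s :: γ, p =>
      ∃ q0 q, Start σ γ q0 ∧ (q0, q) ∈ T ∧ (p, s) ∈ M.δcall a.1 q
  | _, _, _ => False

def Match (R : Set (Q × Q)) (σ : List ({a : A // lab a = SymbolKind.call} × Set (Q × Q)))
    (q : Q) (γ : List Γ) : Prop :=
  ∃ p, Start lab M σ γ p ∧ (p, q) ∈ R

def GoodStack : List ({a : A // lab a = SymbolKind.call} × Set (Q × Q)) → Prop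
  | [] => True
  | (_, T) :: σ => (∀ p q, (p, q) ∈ T → ∃ γ, Start lab M σ γ p) ∧ GoodStack σ

def Good (R : Set (Q × Q))
    (σ : List ({a : A // lab a = SymbolKind.call} × Set (Q × Q))) : Prop :=
  (∀ p q, (p, q) ∈ R → ∃ γ, Start lab M σ γ p) ∧ GoodStack lab M σ

/-- The deterministic automaton. -/
def B : NIDPDA A (Set (Q × Q)) ({a : A // lab a = SymbolKind.call} × Set (Q × Q)) where
  init := {{pq | pq.1 ∈ M.init ∧ pq.2 = pq.1}}
  final := {R | ∃ pq ∈ R, pq.2 ∈ M.final}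
  δint := fun a R => {{pq | ∃ q, (pq.1, q) ∈ R ∧ pq.2 ∈ M.δint a q}}
  δcall := fun a R =>
    {x | ∃ h : lab a = SymbolKind.call,
      x = ({pq | pq.1 = pq.2 ∧ ∃ q s, (∃ q0, (q0, q) ∈ R) ∧ (pq.1, s) ∈ M.δcall a q},
           (⟨a, h⟩, R))}
  δret := fun b os R =>
    match os with
    | none => {{pq | ∃ q, (pq.1, q) ∈ R ∧ pq.2 ∈ M.δret b none q}}
    | some (a, T) =>
        {{pq | ∃ q0 q1 q2 s, (pq.1, q0) ∈ T ∧ (q1, s) ∈ M.δcall a.1 q0 ∧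
            (q1, q2) ∈ R ∧ pq.2 ∈ M.δret b (some s) q2}}

lemma inv (w : List A) {i : ℕ}
    {c : Set (Q × Q) × List ({a : A // lab a = SymbolKind.call} × Set (Q × Q))}
    (h : NIDPDA.Reach lab (B lab M) w i c) :
    (∀ q γ, NIDPDA.Reach lab M w i (q, γ) ↔ Match lab M c.1 c.2 q γ) ∧
      Good lab M c.1 c.2 := by
  induction h with
  | @start R hR =>
    have hR : R = {pq : Q × Q | pq.1 ∈ M.init ∧ pq.2 = pq.1} := hR
    subst hR
    refine ⟨fun q γ => ?_, fun p q hpq => ⟨[], hpq.1⟩, trivial⟩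
    constructor
    · intro h
      cases h with
      | start hq => exact ⟨q, hq, hq, rfl⟩
    · rintro ⟨p, hp, hp', he⟩
      have hq : q = p := he
      subst hq
      cases γ with
      | nil => exact .start hp'
      | cons s γ => exact absurd hp (by simp [Start])
  | @int i R R' σ a hreach hw hlab hstep ih =>
    have hstep : R' = {pq : Q × Q | ∃ q, (pq.1, q) ∈ R ∧ pq.2 ∈ M.δint a q} := hstep
    subst hstep
    obtain ⟨ihm, ihg⟩ := ih
    refine ⟨fun q γ => ?_, fun p q hpq => ?_, ihg.2⟩
    · constructor
      · intro h
        cases h with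
        | int h0 hw' hlab' hs =>
          obtain rfl : _ = a := Option.some.inj (hw'.symm.trans hw)
          obtain ⟨p, hst, hR⟩ := (ihm _ _).1 h0
          exact ⟨p, hst, _, hR, hs⟩
        | call h0 hw' hlab' hs =>
          obtain rfl : _ = a := Option.some.inj (hw'.symm.trans hw)
          simp [hlab] at hlab'
        | ret h0 hw' hlab' hs =>
          obtain rfl : _ = a := Option.some.inj (hw'.symm.trans hw)
          simp [hlab] at hlab'
        | retEmpty h0 hw' hlab' hs =>
          obtain rfl : _ = a := Option.some.inj (hw'.symm.trans hw)
          simp [hlab] at hlab'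
      · rintro ⟨p, hst, q0, hR, hs⟩
        exact .int ((ihm _ _).2 ⟨p, hst, hR⟩) hw hlab hs
    · obtain ⟨q0, hR, _⟩ := hpq
      exact ihg.1 _ _ hR
  | @call i R R' σ t a hreach hw hlab hstep ih =>
    obtain ⟨h, heq⟩ := hstep
    obtain ⟨rfl, rfl⟩ := Prod.mk.injEq .. ▸ heq
    obtain ⟨ihm, ihg⟩ := ih
    refine ⟨fun q γ => ?_, fun p q hpq => ?_, ihg⟩
    · constructor
      · intro hre
        cases hre with
        | int h0 hw' hlab' hs =>
          obtain rfl : _ = a := Option.some.inj (hw'.symm.trans hw)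
          simp [hlab] at hlab'
        | call h0 hw' hlab' hs =>
          obtain rfl : _ = a := Option.some.inj (hw'.symm.trans hw)
          obtain ⟨p, hst, hR⟩ := (ihm _ _).1 h0
          exact ⟨q, ⟨p, _, hst, hR, hs⟩, rfl, _, _, ⟨p, hR⟩, hs⟩
        | ret h0 hw' hlab' hs =>
          obtain rfl : _ = a := Option.some.inj (hw'.symm.trans hw)
          simp [hlab] at hlab'
        | retEmpty h0 hw' hlab' hs =>
          obtain rfl : _ = a := Option.some.inj (hw'.symm.trans hw)
          simp [hlab] at hlab'
      · rintro ⟨p, hst, hdiag⟩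
        obtain rfl : p = q := hdiag.1
        cases γ with
        | nil => exact absurd hst (by simp [Start])
        | cons s γ =>
          obtain ⟨q0, q1, hst0, hR, hc⟩ := hst
          exact .call ((ihm _ _).2 ⟨q0, hst0, hR⟩) hw hlab hc
    · obtain ⟨he, q1, s, ⟨q0, hR⟩, hc⟩ := hpq
      obtain ⟨γ0, hst0⟩ := ihg.1 _ _ hR
      exact ⟨s :: γ0, q0, q1, hst0, hR, hc⟩
  | @ret i R R' σ t a hreach hw hlab hstep ih =>
    obtain ⟨a0, T⟩ := t
    have hstep : R' = {pq : Q × Q | ∃ q0 q1 q2 s, (pq.1, q0) ∈ T ∧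
        (q1, s) ∈ M.δcall a0.1 q0 ∧ (q1, q2) ∈ R ∧ pq.2 ∈ M.δret a (some s) q2} := hstep
    subst hstep
    obtain ⟨ihm, ⟨ihR, ihT, ihgs⟩⟩ := ih
    refine ⟨fun q γ => ?_, fun p q hpq => ?_, ihgs⟩
    · constructor
      · intro hre
        cases hre with
        | int h0 hw' hlab' hs =>
          obtain rfl : _ = a := Option.some.inj (hw'.symm.trans hw)
          simp [hlab] at hlab'
        | call h0 hw' hlab' hs =>
          obtain rfl : _ = a := Option.some.inj (hw'.symm.trans hw)
          simp [hlab] at hlab'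
        | ret h0 hw' hlab' hs =>
          obtain rfl : _ = a := Option.some.inj (hw'.symm.trans hw)
          obtain ⟨p, hst, hR⟩ := (ihm _ _).1 h0
          obtain ⟨q0, q1, hst0, hT, hc⟩ := hst
          exact ⟨q0, hst0, q1, p, _, _, hT, hc, hR, hs⟩
        | retEmpty h0 hw' hlab' hs =>
          obtain ⟨p, hst, hR⟩ := (ihm _ _).1 h0
          exact absurd hst (by simp [Start])
      · rintro ⟨p, hst, q0, q1, q2, s, hT, hc, hR, hs⟩
        exact .ret ((ihm _ _).2 ⟨q1, ⟨p, q0, hst, hT, hc⟩, hR⟩) hw hlab hs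
    · obtain ⟨q0, q1, q2, s, hT, _, _, _⟩ := hpq
      exact ihT _ _ hT
  | @retEmpty i R R' a hreach hw hlab hstep ih =>
    have hstep : R' = {pq : Q × Q | ∃ q, (pq.1, q) ∈ R ∧ pq.2 ∈ M.δret a none q} := hstep
    subst hstep
    obtain ⟨ihm, ihg⟩ := ih
    refine ⟨fun q γ => ?_, fun p q hpq => ?_, trivial⟩
    · constructor
      · intro hre
        cases hre with
        | int h0 hw' hlab' hs =>
          obtain rfl : _ = a := Option.some.inj (hw'.symm.trans hw)
          simp [hlab] at hlab'
        | call h0 hw' hlab' hs =>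
          obtain rfl : _ = a := Option.some.inj (hw'.symm.trans hw)
          simp [hlab] at hlab'
        | ret h0 hw' hlab' hs =>
          obtain ⟨p, hst, hR⟩ := (ihm _ _).1 h0
          exact absurd hst (by simp [Start])
        | retEmpty h0 hw' hlab' hs =>
          obtain rfl : _ = a := Option.some.inj (hw'.symm.trans hw)
          obtain ⟨p, hst, hR⟩ := (ihm _ _).1 h0
          exact ⟨p, hst, _, hR, hs⟩
      · rintro ⟨p, hst, q0, hR, hs⟩
        cases γ with
        | nil => exact .retEmpty ((ihm _ _).2 ⟨p, hst, hR⟩) hw hlab hs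
        | cons s γ => exact absurd hst (by simp [Start])
    · obtain ⟨q0, hR, _⟩ := hpq
      exact ihg.1 _ _ hR

lemma existsB (w : List A) :
    ∀ i, i ≤ w.length → ∃ c, NIDPDA.Reach lab (B lab M) w i c := by
  intro i
  induction i with
  | zero => exact fun _ => ⟨_, .start rfl⟩
  | succ i ih =>
    intro h
    obtain ⟨⟨R, σ⟩, hc⟩ := ih (Nat.le_of_succ_le h)
    have hilt : i < w.length := h
    have ha : w[i]? = some w[i] := List.getElem?_eq_getElem hilt
    cases hk : lab w[i] with
    | int => exact ⟨_, .int hc ha hk rfl⟩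
    | call => exact ⟨_, .call hc ha hk ⟨hk, rfl⟩⟩
    | ret =>
      cases σ with
      | nil => exact ⟨_, .retEmpty hc ha hk rfl⟩
      | cons t σ =>
        obtain ⟨a0, T⟩ := t
        exact ⟨_, .ret (s := (a0, T)) hc ha hk rfl⟩

end Det

/-- **Determinization of input-driven pushdown automata**
(von Braunmühl–Verbeek; Alur–Madhusudan).  Every nondeterministic
input-driven pushdown automaton with state set `Q` is simulated by a
deterministic one with set of states `2^{Q×Q}` (all binary relations on
`Q`, i.e., `Set (Q × Q)`) and stack alphabet `Σ₊₁ × 2^{Q×Q}`, which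
recognizes the same language.  In particular, an `n`-state NIDPDA is
simulated by a DIDPDA with `2^(n²)` states and `|Σ₊₁|·2^(n²)` stack
symbols. -/


theorem nidpda_determinization {A Q Γ : Type} [Finite A] [Finite Q] [Finite Γ]
    (lab : A → SymbolKind) (M : NIDPDA A Q Γ) :
    ∃ B : NIDPDA A (Set (Q × Q)) ({a : A // lab a = SymbolKind.call} × Set (Q × Q)),
      B.Deterministic ∧ NIDPDA.Language lab B = NIDPDA.Language lab M := by
  refine ⟨Det.B lab M, ⟨⟨_, rfl⟩, fun a q => ?_, fun a q => ?_, fun a s q => ?_⟩, ?_⟩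
  · intro x hx y hy; exact hx.trans hy.symm
  · rintro x ⟨h1, rfl⟩ y ⟨h2, rfl⟩; rfl
  · rcases s with _ | ⟨a0, T⟩ <;> · intro x hx y hy; exact hx.trans hy.symm
  · ext w
    constructor
    · rintro ⟨R, σ, hre, pq, hpq, hf⟩
      obtain ⟨ihm, ihg⟩ := Det.inv lab M w hre
      obtain ⟨γ, hst⟩ := ihg.1 _ _ hpq
      exact ⟨pq.2, γ, (ihm _ _).2 ⟨pq.1, hst, hpq⟩, hf⟩
    · rintro ⟨q, γ, hre, hf⟩
      obtain ⟨⟨R, σ⟩, hB⟩ := Det.existsB lab M w w.length le_rfl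
      obtain ⟨ihm, _⟩ := Det.inv lab M w hB
      obtain ⟨p, hst, hpq⟩ := (ihm _ _).1 hre
      exact ⟨R, σ, hB, (p, q), hpq, hf⟩
end

section
/- Let A = (Σ₊₁, Σ₀, Σ₋₁, Q, Q₀, Γ, ⟨δ_a⟩_{a∈Σ}, F) be a nondeterministic event-clock input-driven pushdown automaton and let Ψ be the (finite) set of atomic clock constraints occurring in the clock constraints used in its transitions. Then there exists a deterministic event-clock input-driven pushdown automaton B, with set of states Q' = 2^{Q×Q} and pushdown alphabet Γ' = 2^{Q×Q} × Σ₊₁ × 2^{Ψ}, all of whose clock constraints are Boolean combinations of atomic constraints from Ψ, such that B recognizes the same set of timed strings as A. In particular, an n-state nondeterministic automaton with k atomic clock constraints is simulated by a deterministic one with 2^{n²} states and |Σ₊₁|·2^{n²+k} stack symbols. -/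
/-- The event clocks over an alphabet `A`: symbol history clocks `◁a`,
symbol prediction clocks `▷a`, the stack history clock `◁s` and the
stack prediction clock `▷s`. -/
inductive Clock (A : Type) : Type
  | histS (a : A)
  | predS (a : A)
  | histStack
  | predStack

/-- Clock constraints: Boolean combinations of atomic constraints
`C ≤ τ` and `C ≥ τ` (with a trivial constraint `tt`). -/
inductive ClockConstraint (A : Type) : Type
  | tt
  | le (C : Clock A) (τ : ℝ)
  | ge (C : Clock A) (τ : ℝ)
  | and (φ ψ : ClockConstraint A)
  | or (φ ψ : ClockConstraint A)
  | not (φ : ClockConstraint A)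

/-- The atomic constraints occurring in a clock constraint. -/
def ClockConstraint.atoms {A : Type} : ClockConstraint A → Set (ClockConstraint A)
  | .tt => ∅
  | .le C τ => {ClockConstraint.le C τ}
  | .ge C τ => {ClockConstraint.ge C τ}
  | .and φ ψ => φ.atoms ∪ ψ.atoms
  | .or φ ψ => φ.atoms ∪ ψ.atoms
  | .not φ => φ.atoms

/-- The clocks referred to by a clock constraint. -/
def ClockConstraint.clocks {A : Type} : ClockConstraint A → Set (Clock A)
  | .tt => ∅
  | .le C _ => {C}
  | .ge C _ => {C}
  | .and φ ψ => φ.clocks ∪ ψ.clocks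
  | .or φ ψ => φ.clocks ∪ ψ.clocks
  | .not φ => φ.clocks

/-- A timed string: the (real) time stamps are strictly increasing. -/
def IsTimed {A : Type} (w : List (A × ℝ)) : Prop :=
  (w.map Prod.snd).Chain' (· < ·)

/-- Well-nested (balanced) strings: every bracket is matched inside. -/
inductive WellNested {A : Type} (lab : A → SymbolKind) : List A → Prop
  | nil : WellNested lab []
  | int {a : A} {u : List A} :
      lab a = SymbolKind.int → WellNested lab u → WellNested lab (a :: u)
  | wrap {a b : A} {u v : List A} :
      lab a = SymbolKind.call → lab b = SymbolKind.ret →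
      WellNested lab u → WellNested lab v → WellNested lab (a :: u ++ b :: v)

/-- Position `j` holds a left bracket matched by the right bracket at
position `i`: the interior is well-nested. -/
def Matches {A : Type} (lab : A → SymbolKind) (w : List (A × ℝ)) (j i : ℕ) : Prop :=
  j < i ∧ i < w.length ∧
  (∃ p : A × ℝ, w[j]? = some p ∧ lab p.1 = SymbolKind.call) ∧
  (∃ p : A × ℝ, w[i]? = some p ∧ lab p.1 = SymbolKind.ret) ∧
  WellNested lab (((w.map Prod.fst).drop (j + 1)).take (i - j - 1))

/-- `ClockVal lab w i C v` : the clock `C` is defined at position `i`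
of the timed string `w` and has value `v`. -/
def ClockVal {A : Type} (lab : A → SymbolKind) (w : List (A × ℝ)) (i : ℕ) :
    Clock A → ℝ → Prop
  | .histS a, v => ∃ (pi pj : A × ℝ) (j : ℕ), w[i]? = some pi ∧ j < i ∧
      w[j]? = some pj ∧ pj.1 = a ∧
      (∀ (j' : ℕ) (p' : A × ℝ), j < j' → j' < i → w[j']? = some p' → p'.1 ≠ a) ∧
      v = pi.2 - pj.2
  | .predS a, v => ∃ (pi pj : A × ℝ) (j : ℕ), w[i]? = some pi ∧ i < j ∧
      w[j]? = some pj ∧ pj.1 = a ∧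
      (∀ (j' : ℕ) (p' : A × ℝ), i < j' → j' < j → w[j']? = some p' → p'.1 ≠ a) ∧
      v = pj.2 - pi.2
  | .histStack, v => ∃ (pi pj : A × ℝ) (j : ℕ), Matches lab w j i ∧
      w[i]? = some pi ∧ w[j]? = some pj ∧ v = pi.2 - pj.2
  | .predStack, v => ∃ (pi pj : A × ℝ) (j : ℕ), Matches lab w i j ∧
      w[i]? = some pi ∧ w[j]? = some pj ∧ v = pj.2 - pi.2

/-- Truth of a clock constraint at position `i` of the timed string `w`;
an atomic constraint is true only if the clock value is defined. -/
def Sat {A : Type} (lab : A → SymbolKind) (w : List (A × ℝ)) (i : ℕ) :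
    ClockConstraint A → Prop
  | .tt => True
  | .le C τ => ∃ v, ClockVal lab w i C v ∧ v ≤ τ
  | .ge C τ => ∃ v, ClockVal lab w i C v ∧ τ ≤ v
  | .and φ ψ => Sat lab w i φ ∧ Sat lab w i ψ
  | .or φ ψ => Sat lab w i φ ∨ Sat lab w i ψ
  | .not φ => ¬ Sat lab w i φ

/-- A nondeterministic event-clock input-driven pushdown automaton
(ECIDPDA) with states `Q` and stack alphabet `Γ`. -/
structure ECIDPDA (A Q Γ : Type) where
  init : Set Q
  final : Set Q
  δint : A → Q → ClockConstraint A → Set Q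
  δcall : A → Q → ClockConstraint A → Set (Q × Γ)
  δret : A → Option Γ → Q → ClockConstraint A → Set Q

/-- Configurations reachable after reading the first `i` symbols of the
timed string `w` (starting in an initial state with the empty stack);
each transition is guarded by a clock constraint which must be true at
the corresponding position. -/
inductive Reach {A Q Γ : Type} (lab : A → SymbolKind) (M : ECIDPDA A Q Γ)
    (w : List (A × ℝ)) : ℕ → Q × List Γ → Prop
  | start {q : Q} : q ∈ M.init → Reach lab M w 0 (q, [])
  | int {i : ℕ} {q q' : Q} {γ : List Γ} {p : A × ℝ} {φ : ClockConstraint A} :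
      Reach lab M w i (q, γ) → w[i]? = some p → lab p.1 = SymbolKind.int →
      Sat lab w i φ → q' ∈ M.δint p.1 q φ → Reach lab M w (i + 1) (q', γ)
  | call {i : ℕ} {q q' : Q} {γ : List Γ} {s : Γ} {p : A × ℝ} {φ : ClockConstraint A} :
      Reach lab M w i (q, γ) → w[i]? = some p → lab p.1 = SymbolKind.call →
      Sat lab w i φ → (q', s) ∈ M.δcall p.1 q φ → Reach lab M w (i + 1) (q', s :: γ)
  | ret {i : ℕ} {q q' : Q} {γ : List Γ} {s : Γ} {p : A × ℝ} {φ : ClockConstraint A} :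
      Reach lab M w i (q, s :: γ) → w[i]? = some p → lab p.1 = SymbolKind.ret →
      Sat lab w i φ → q' ∈ M.δret p.1 (some s) q φ → Reach lab M w (i + 1) (q', γ)
  | retEmpty {i : ℕ} {q q' : Q} {p : A × ℝ} {φ : ClockConstraint A} :
      Reach lab M w i (q, []) → w[i]? = some p → lab p.1 = SymbolKind.ret →
      Sat lab w i φ → q' ∈ M.δret p.1 none q φ → Reach lab M w (i + 1) (q', [])

/-- Acceptance: some computation reads the whole string and ends in an
accepting state, with any stack contents. -/
def ECIDPDA.Accepts {A Q Γ : Type} (lab : A → SymbolKind) (M : ECIDPDA A Q Γ)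
    (w : List (A × ℝ)) : Prop :=
  ∃ (q : Q) (γ : List Γ), Reach lab M w w.length (q, γ) ∧ q ∈ M.final

/-- The clock constraints actually used (guarding some transition). -/
def ECIDPDA.used {A Q Γ : Type} (M : ECIDPDA A Q Γ) : Set (ClockConstraint A) :=
  {φ | (∃ a q, (M.δint a q φ).Nonempty) ∨ (∃ a q, (M.δcall a q φ).Nonempty) ∨
       (∃ a s q, (M.δret a s q φ).Nonempty)}

/-- The set of atomic constraints occurring in the constraints used in
the transitions. -/
def ECIDPDA.atomicSet {A Q Γ : Type} (M : ECIDPDA A Q Γ) : Set (ClockConstraint A) :=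
  ⋃ φ ∈ M.used, φ.atoms

/-- Determinism: one initial state, at most one transition per clock
constraint, and distinct constraints guarding transitions from the same
state (and popped symbol) are never simultaneously true at any position
of any timed string. -/
def ECIDPDA.Deterministic {A Q Γ : Type} (lab : A → SymbolKind)
    (M : ECIDPDA A Q Γ) : Prop :=
  (∃ q₀ : Q, M.init = {q₀}) ∧
  (∀ a q φ, (M.δint a q φ).Subsingleton) ∧
  (∀ a q φ, (M.δcall a q φ).Subsingleton) ∧
  (∀ a s q φ, (M.δret a s q φ).Subsingleton) ∧
  (∀ a q φ φ', φ ≠ φ' → (M.δint a q φ).Nonempty → (M.δint a q φ').Nonempty →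
    ∀ (w : List (A × ℝ)) (i : ℕ), IsTimed w → i < w.length →
      ¬ (Sat lab w i φ ∧ Sat lab w i φ')) ∧
  (∀ a q φ φ', φ ≠ φ' → (M.δcall a q φ).Nonempty → (M.δcall a q φ').Nonempty →
    ∀ (w : List (A × ℝ)) (i : ℕ), IsTimed w → i < w.length →
      ¬ (Sat lab w i φ ∧ Sat lab w i φ')) ∧
  (∀ a s q φ φ', φ ≠ φ' → (M.δret a s q φ).Nonempty → (M.δret a s q φ').Nonempty →
    ∀ (w : List (A × ℝ)) (i : ℕ), IsTimed w → i < w.length →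
      ¬ (Sat lab w i φ ∧ Sat lab w i φ'))


/-! The summary construction for input-driven pushdown automata, with the truth values of the
atomic constraints guessed. A state of the deterministic automaton is a set of pairs `(q, q')`:
`q` is reachable right after the last pending left bracket and `q'` is reachable from it by a
well-matched run up to the current position (at top level, only `q'` matters). A left bracket
pushes the current set, the letter and the set `T` of atoms true there, and restarts from the
diagonal; the matching right bracket composes the pushed pairs, a call transition of `M` read in
the pushed `T`, the current pairs and a return transition. Each transition is guarded by the
conjunction of the atoms of `T` and the negations of the others, so distinct guards are
exclusive and exactly one of them holds at every position. -/

theorem Finset.mem_toList_univ {α : Type*} [Fintype α] (a : α) :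
    a ∈ (Finset.univ : Finset α).toList :=
  Finset.mem_toList.mpr (Finset.mem_univ a)

namespace ClockConstraint

variable {A : Type}

theorem ne_not (φ : ClockConstraint A) : φ ≠ not φ := fun h => by
  simpa using congrArg sizeOf h

theorem atoms_finite : ∀ φ : ClockConstraint A, φ.atoms.Finite
  | tt => Set.finite_empty
  | le _ _ | ge _ _ => Set.finite_singleton _
  | and φ ψ | or φ ψ => φ.atoms_finite.union ψ.atoms_finite
  | not φ => φ.atoms_finite

theorem atoms_eq_singleton_of_mem_atoms {φ ψ : ClockConstraint A} (h : ψ ∈ φ.atoms) :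
    ψ.atoms = {ψ} := by
  induction φ with
  | tt => exact absurd h (Set.notMem_empty _)
  | le | ge => rw [Set.mem_singleton_iff.mp h]; rfl
  | and _ _ ih₁ ih₂ | or _ _ ih₁ ih₂ => exact h.elim ih₁ ih₂
  | not _ ih => exact ih h

variable {Ψ : Set (ClockConstraint A)}

def Eval (T : Set Ψ) : ClockConstraint A → Prop
  | tt => True
  | le C τ => ∃ h : le C τ ∈ Ψ, ⟨_, h⟩ ∈ T
  | ge C τ => ∃ h : ge C τ ∈ Ψ, ⟨_, h⟩ ∈ T
  | and φ ψ => Eval T φ ∧ Eval T ψ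
  | or φ ψ => Eval T φ ∨ Eval T ψ
  | not φ => ¬ Eval T φ

end ClockConstraint

open ClockConstraint

section

variable {A : Type}

def trueAtoms (Ψ : Set (ClockConstraint A)) (lab : A → SymbolKind) (w : List (A × ℝ)) (i : ℕ) :
    Set Ψ :=
  {ψ | Sat lab w i ψ}

theorem eval_trueAtoms_iff {Ψ : Set (ClockConstraint A)} {lab : A → SymbolKind}
    {w : List (A × ℝ)} {i : ℕ} :
    ∀ {φ : ClockConstraint A}, φ.atoms ⊆ Ψ → (Eval (trueAtoms Ψ lab w i) φ ↔ Sat lab w i φ)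
  | .tt, _ => Iff.rfl
  | .le _ _, h | .ge _ _, h => ⟨fun ⟨_, hs⟩ => hs, fun hs => ⟨h rfl, hs⟩⟩
  | .and _ _, h => and_congr (eval_trueAtoms_iff fun _ hx => h (.inl hx))
      (eval_trueAtoms_iff fun _ hx => h (.inr hx))
  | .or _ _, h => or_congr (eval_trueAtoms_iff fun _ hx => h (.inl hx))
      (eval_trueAtoms_iff fun _ hx => h (.inr hx))
  | .not _, h => not_congr (eval_trueAtoms_iff h)

section CharConstraint

variable {Ψ : Set (ClockConstraint A)}

open Classical in
noncomputable def charConstraint (L : List Ψ) (T : Set Ψ) : ClockConstraint A :=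
  L.foldr (fun ψ φ => .and (if ψ ∈ T then ψ.1 else .not ψ.1) φ) .tt

theorem sat_charConstraint_iff {lab : A → SymbolKind} {w : List (A × ℝ)} {i : ℕ}
    {L : List Ψ} {T : Set Ψ} :
    Sat lab w i (charConstraint L T) ↔ ∀ ψ ∈ L, (ψ ∈ T ↔ ψ ∈ trueAtoms Ψ lab w i) := by
  induction L with
  | nil => simp [charConstraint, Sat]
  | cons ψ L ih =>
    rw [List.forall_mem_cons, ← ih]
    change Sat lab w i _ ∧ Sat lab w i (charConstraint L T) ↔ _
    split_ifs with hψ <;> simp [Sat, hψ, trueAtoms]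

theorem eq_of_charConstraint_eq {L : List Ψ} {T T' : Set Ψ}
    (h : charConstraint L T = charConstraint L T') : ∀ ψ ∈ L, (ψ ∈ T ↔ ψ ∈ T') := by
  induction L with
  | nil => simp
  | cons ψ L ih =>
    obtain ⟨hlit, hrest⟩ := ClockConstraint.and.inj h
    refine List.forall_mem_cons.mpr ⟨?_, ih hrest⟩
    split_ifs at hlit with h₁ h₂ h₂
    · exact iff_of_true h₁ h₂
    · exact absurd hlit (ne_not _)
    · exact absurd hlit.symm (ne_not _)
    · exact iff_of_false h₁ h₂

theorem atoms_charConstraint_subset (hΨ : ∀ ψ ∈ Ψ, ψ.atoms ⊆ Ψ) (L : List Ψ) (T : Set Ψ) :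
    (charConstraint L T).atoms ⊆ Ψ := by
  induction L with
  | nil => exact Set.empty_subset _
  | cons ψ L ih =>
    refine Set.union_subset ?_ ih
    split_ifs
    exacts [hΨ ψ ψ.2, hΨ ψ ψ.2]

variable {L : List Ψ}

theorem sat_charConstraint_iff_eq (hL : ∀ ψ, ψ ∈ L) {lab : A → SymbolKind} {w : List (A × ℝ)}
    {i : ℕ} {T : Set Ψ} : Sat lab w i (charConstraint L T) ↔ T = trueAtoms Ψ lab w i := by
  simp only [sat_charConstraint_iff, hL, true_implies, Set.ext_iff]

theorem charConstraint_injective (hL : ∀ ψ, ψ ∈ L) : Function.Injective (charConstraint L) :=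
  fun _ _ h => Set.ext fun ψ => eq_of_charConstraint_eq h ψ (hL ψ)

end CharConstraint

namespace ECIDPDA

variable {Q Γ : Type} (M : ECIDPDA A Q Γ)

theorem atoms_subset_atomicSet {φ : ClockConstraint A} (h : φ ∈ M.used) :
    φ.atoms ⊆ M.atomicSet :=
  fun _ hψ => Set.mem_biUnion h hψ

theorem atomicSet_finite (hfin : M.used.Finite) : M.atomicSet.Finite :=
  hfin.biUnion fun φ _ => φ.atoms_finite

theorem atoms_subset_atomicSet_of_mem {ψ : ClockConstraint A} (h : ψ ∈ M.atomicSet) :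
    ψ.atoms ⊆ M.atomicSet := by
  obtain ⟨φ, -, hψ⟩ := Set.mem_iUnion₂.mp h
  rw [atoms_eq_singleton_of_mem_atoms hψ]
  exact Set.singleton_subset_iff.mpr h

variable {M} {a : A} {q q' : Q} {φ : ClockConstraint A}

theorem mem_used_of_mem_δint (h : q' ∈ M.δint a q φ) : φ ∈ M.used :=
  .inl ⟨a, q, q', h⟩

theorem mem_used_of_mem_δcall {x : Q × Γ} (h : x ∈ M.δcall a q φ) : φ ∈ M.used :=
  .inr (.inl ⟨a, q, x, h⟩)

theorem mem_used_of_mem_δret {s : Option Γ} (h : q' ∈ M.δret a s q φ) : φ ∈ M.used :=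
  .inr (.inr ⟨a, s, q, q', h⟩)

theorem eval_iff_sat {lab : A → SymbolKind} {w : List (A × ℝ)} {i : ℕ} (h : φ ∈ M.used) :
    Eval (trueAtoms M.atomicSet lab w i) φ ↔ Sat lab w i φ :=
  eval_trueAtoms_iff (M.atoms_subset_atomicSet h)

variable (M) in
def reachable (lab : A → SymbolKind) (w : List (A × ℝ)) (i : ℕ) : Set Q :=
  {q | ∃ γ, Reach lab M w i (q, γ)}

end ECIDPDA

section Runs

variable {Q Γ : Type}

/-- An unmatched right bracket leaves the stack height at `0` (truncated subtraction), as
`Reach.retEmpty` leaves the stack empty. -/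
def height (lab : A → SymbolKind) (w : List (A × ℝ)) : ℕ → ℕ
  | 0 => 0
  | i + 1 =>
    match w[i]? with
    | some p =>
      match lab p.1 with
      | .call => height lab w i + 1
      | .ret => height lab w i - 1
      | .int => height lab w i
    | none => height lab w i

/-- Runs of `M` from state `q₀` at position `j` that never look below the stack present at `j`;
the list records only what they pushed on top of it. -/
inductive LocalReach (lab : A → SymbolKind) (M : ECIDPDA A Q Γ) (w : List (A × ℝ))
    (j : ℕ) (q₀ : Q) : ℕ → Q × List Γ → Prop
  | start : LocalReach lab M w j q₀ j (q₀, [])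
  | int {i : ℕ} {q q' : Q} {γ : List Γ} {p : A × ℝ} {φ : ClockConstraint A} :
      LocalReach lab M w j q₀ i (q, γ) → w[i]? = some p → lab p.1 = SymbolKind.int →
      Sat lab w i φ → q' ∈ M.δint p.1 q φ → LocalReach lab M w j q₀ (i + 1) (q', γ)
  | call {i : ℕ} {q q' : Q} {γ : List Γ} {s : Γ} {p : A × ℝ} {φ : ClockConstraint A} :
      LocalReach lab M w j q₀ i (q, γ) → w[i]? = some p → lab p.1 = SymbolKind.call →
      Sat lab w i φ → (q', s) ∈ M.δcall p.1 q φ → LocalReach lab M w j q₀ (i + 1) (q', s :: γ)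
  | ret {i : ℕ} {q q' : Q} {γ : List Γ} {s : Γ} {p : A × ℝ} {φ : ClockConstraint A} :
      LocalReach lab M w j q₀ i (q, s :: γ) → w[i]? = some p → lab p.1 = SymbolKind.ret →
      Sat lab w i φ → q' ∈ M.δret p.1 (some s) q φ → LocalReach lab M w j q₀ (i + 1) (q', γ)

variable {lab : A → SymbolKind} {M : ECIDPDA A Q Γ} {w : List (A × ℝ)}
  {i j : ℕ} {p : A × ℝ} {q₀ q' : Q} {γ : List Γ}

theorem height_succ_of_int (hw : w[i]? = some p) (hk : lab p.1 = .int) :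
    height lab w (i + 1) = height lab w i := by
  simp only [height, hw, hk]

theorem height_succ_of_call (hw : w[i]? = some p) (hk : lab p.1 = .call) :
    height lab w (i + 1) = height lab w i + 1 := by
  simp only [height, hw, hk]

theorem height_succ_of_ret (hw : w[i]? = some p) (hk : lab p.1 = .ret) :
    height lab w (i + 1) = height lab w i - 1 := by
  simp only [height, hw, hk]

theorem Reach.length_eq_height {c : Q × List Γ} (h : Reach lab M w i c) :
    c.2.length = height lab w i := by
  induction h with
  | start => rfl
  | int _ hw hk _ _ ih => rw [height_succ_of_int hw hk, ← ih]
  | call _ hw hk _ _ ih => rw [height_succ_of_call hw hk, ← ih]; rfl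
  | ret _ hw hk _ _ ih => rw [height_succ_of_ret hw hk, ← ih]; rfl
  | retEmpty _ hw hk _ _ ih => rw [height_succ_of_ret hw hk, ← ih]; rfl

theorem LocalReach.le {c : Q × List Γ} (h : LocalReach lab M w j q₀ i c) : j ≤ i := by
  induction h <;> omega

theorem LocalReach.height_eq {c : Q × List Γ} (h : LocalReach lab M w j q₀ i c) :
    height lab w i = c.2.length + height lab w j := by
  induction h with
  | start => simp
  | int _ hw hk _ _ ih => rw [height_succ_of_int hw hk, ih]
  | call _ hw hk _ _ ih => rw [height_succ_of_call hw hk, ih, List.length_cons, Nat.add_right_comm]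
  | ret _ hw hk _ _ ih => simp only [height_succ_of_ret hw hk, ih, List.length_cons]; omega

theorem LocalReach.eq_nil_of_height_eq {q : Q} {μ : List Γ}
    (h : LocalReach lab M w j q₀ i (q, μ)) (heq : height lab w i = height lab w j) : μ = [] := by
  have := h.height_eq
  simp only at this
  exact List.eq_nil_of_length_eq_zero (by omega)

theorem LocalReach.height_succ_lt {q : Q} (h : LocalReach lab M w j q₀ i (q, []))
    (hw : w[i]? = some p) (hk : lab p.1 = .ret) (hpos : 0 < height lab w j) :
    height lab w (i + 1) < height lab w j := by
  rw [height_succ_of_ret hw hk, h.height_eq, List.length_nil, Nat.zero_add]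
  omega

theorem LocalReach.eq_of_self {c : Q × List Γ} (h : LocalReach lab M w j q₀ j c) :
    c = (q₀, []) := by
  cases h with
  | start => rfl
  | int h | call h | ret h => exact absurd h.le (by omega)

theorem Reach.of_localReach {δ : List Γ} {c : Q × List Γ} (h₀ : Reach lab M w j (q₀, δ))
    (h : LocalReach lab M w j q₀ i c) : Reach lab M w i (c.1, c.2 ++ δ) := by
  induction h with
  | start => exact h₀
  | int _ hw hk hs ht ih => exact ih.int hw hk hs ht
  | call _ hw hk hs ht ih => exact ih.call hw hk hs ht
  | ret _ hw hk hs ht ih => exact ih.ret hw hk hs ht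

theorem LocalReach.trans {k : ℕ} {q₁ : Q} {μ : List Γ} {c : Q × List Γ}
    (h₁ : LocalReach lab M w j q₀ k (q₁, μ)) (h₂ : LocalReach lab M w k q₁ i c) :
    LocalReach lab M w j q₀ i (c.1, c.2 ++ μ) := by
  induction h₂ with
  | start => exact h₁
  | int _ hw hk hs ht ih => exact ih.int hw hk hs ht
  | call _ hw hk hs ht ih => exact ih.call hw hk hs ht
  | ret _ hw hk hs ht ih => exact ih.ret hw hk hs ht

theorem Reach.inv_int (h : Reach lab M w (i + 1) (q', γ)) (hw : w[i]? = some p)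
    (hk : lab p.1 = .int) :
    ∃ q φ, Reach lab M w i (q, γ) ∧ Sat lab w i φ ∧ q' ∈ M.δint p.1 q φ := by
  cases h with
  | int h hw' _ hs ht => cases hw.symm.trans hw'; exact ⟨_, _, h, hs, ht⟩
  | call _ hw' hk' | ret _ hw' hk' | retEmpty _ hw' hk' =>
    cases hw.symm.trans hw'; cases hk.symm.trans hk'

theorem Reach.inv_call (h : Reach lab M w (i + 1) (q', γ)) (hw : w[i]? = some p)
    (hk : lab p.1 = .call) : ∃ s γ₀ q φ, γ = s :: γ₀ ∧ Reach lab M w i (q, γ₀) ∧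
      Sat lab w i φ ∧ (q', s) ∈ M.δcall p.1 q φ := by
  cases h with
  | call h hw' _ hs ht => cases hw.symm.trans hw'; exact ⟨_, _, _, _, rfl, h, hs, ht⟩
  | int _ hw' hk' | ret _ hw' hk' | retEmpty _ hw' hk' =>
    cases hw.symm.trans hw'; cases hk.symm.trans hk'

theorem Reach.inv_ret_of_height_pos (h : Reach lab M w (i + 1) (q', γ)) (hw : w[i]? = some p)
    (hk : lab p.1 = .ret) (hpos : 0 < height lab w i) : ∃ s q φ,
      Reach lab M w i (q, s :: γ) ∧ Sat lab w i φ ∧ q' ∈ M.δret p.1 (some s) q φ := by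
  cases h with
  | ret h hw' _ hs ht => cases hw.symm.trans hw'; exact ⟨_, _, _, h, hs, ht⟩
  | retEmpty h => exact absurd h.length_eq_height hpos.ne
  | int _ hw' hk' | call _ hw' hk' => cases hw.symm.trans hw'; cases hk.symm.trans hk'

theorem Reach.inv_ret_of_height_eq_zero (h : Reach lab M w (i + 1) (q', γ))
    (hw : w[i]? = some p) (hk : lab p.1 = .ret) (h0 : height lab w i = 0) : ∃ q φ,
      Reach lab M w i (q, []) ∧ Sat lab w i φ ∧ q' ∈ M.δret p.1 none q φ := by
  cases h with
  | retEmpty h hw' _ hs ht => cases hw.symm.trans hw'; exact ⟨_, _, h, hs, ht⟩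
  | ret h => exact absurd h.length_eq_height (by simp [h0])
  | int _ hw' hk' | call _ hw' hk' => cases hw.symm.trans hw'; cases hk.symm.trans hk'

theorem LocalReach.inv_int (h : LocalReach lab M w j q₀ (i + 1) (q', γ)) (hji : j ≤ i)
    (hw : w[i]? = some p) (hk : lab p.1 = .int) :
    ∃ q φ, LocalReach lab M w j q₀ i (q, γ) ∧ Sat lab w i φ ∧ q' ∈ M.δint p.1 q φ := by
  cases h with
  | start => omega
  | int h hw' _ hs ht => cases hw.symm.trans hw'; exact ⟨_, _, h, hs, ht⟩
  | call _ hw' hk' | ret _ hw' hk' => cases hw.symm.trans hw'; cases hk.symm.trans hk'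

theorem LocalReach.inv_call (h : LocalReach lab M w j q₀ (i + 1) (q', γ)) (hji : j ≤ i)
    (hw : w[i]? = some p) (hk : lab p.1 = .call) : ∃ s γ₀ q φ, γ = s :: γ₀ ∧
      LocalReach lab M w j q₀ i (q, γ₀) ∧ Sat lab w i φ ∧ (q', s) ∈ M.δcall p.1 q φ := by
  cases h with
  | start => omega
  | call h hw' _ hs ht => cases hw.symm.trans hw'; exact ⟨_, _, _, _, rfl, h, hs, ht⟩
  | int _ hw' hk' | ret _ hw' hk' => cases hw.symm.trans hw'; cases hk.symm.trans hk'

theorem LocalReach.inv_ret (h : LocalReach lab M w j q₀ (i + 1) (q', γ)) (hji : j ≤ i)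
    (hw : w[i]? = some p) (hk : lab p.1 = .ret) : ∃ s q φ,
      LocalReach lab M w j q₀ i (q, s :: γ) ∧ Sat lab w i φ ∧ q' ∈ M.δret p.1 (some s) q φ := by
  cases h with
  | start => omega
  | ret h hw' _ hs ht => cases hw.symm.trans hw'; exact ⟨_, _, _, h, hs, ht⟩
  | int _ hw' hk' | call _ hw' hk' => cases hw.symm.trans hw'; cases hk.symm.trans hk'

end Runs

section Decompose

variable {Q Γ : Type} {lab : A → SymbolKind} {M : ECIDPDA A Q Γ} {w : List (A × ℝ)} {j : ℕ}

theorem Reach.decompose (hpos : 0 < height lab w j) :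
    ∀ i, j ≤ i → (∀ k, j ≤ k → k ≤ i → height lab w j ≤ height lab w k) →
      ∀ c : Q × List Γ, Reach lab M w i c → ∃ q₁ δ μ, c.2 = μ ++ δ ∧
        Reach lab M w j (q₁, δ) ∧ LocalReach lab M w j q₁ i (c.1, μ) := by
  refine Nat.le_induction (fun _ c h => ⟨c.1, c.2, [], rfl, h, .start⟩) ?_
  intro i hji ih hmin c h
  replace ih := ih fun k h₁ h₂ => hmin k h₁ (by omega)
  cases h with
  | int h hw hk hs ht =>
    obtain ⟨q₁, δ, μ, rfl, h₁, h₂⟩ := ih _ h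
    exact ⟨q₁, δ, μ, rfl, h₁, h₂.int hw hk hs ht⟩
  | call h hw hk hs ht =>
    obtain ⟨q₁, δ, μ, rfl, h₁, h₂⟩ := ih _ h
    exact ⟨q₁, δ, _ :: μ, rfl, h₁, h₂.call hw hk hs ht⟩
  | ret h hw hk hs ht =>
    obtain ⟨q₁, δ, μ, hμ, h₁, h₂⟩ := ih _ h
    cases μ with
    | nil => exact absurd (hmin (i + 1) (by omega) le_rfl) (h₂.height_succ_lt hw hk hpos).not_ge
    | cons s μ =>
      cases hμ
      exact ⟨q₁, δ, μ, rfl, h₁, h₂.ret hw hk hs ht⟩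
  | retEmpty h =>
    have h₀ : height lab w i = 0 := h.length_eq_height.symm
    have := hmin i hji (by omega)
    omega

theorem LocalReach.decompose {j₀ : ℕ} {q₀ : Q} (hj₀ : j₀ ≤ j) (hpos : 0 < height lab w j) :
    ∀ i, j ≤ i → (∀ k, j ≤ k → k ≤ i → height lab w j ≤ height lab w k) →
      ∀ c : Q × List Γ, LocalReach lab M w j₀ q₀ i c → ∃ q₁ δ μ, c.2 = μ ++ δ ∧
        LocalReach lab M w j₀ q₀ j (q₁, δ) ∧ LocalReach lab M w j q₁ i (c.1, μ) := by
  refine Nat.le_induction (fun _ c h => ⟨c.1, c.2, [], rfl, h, .start⟩) ?_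
  intro i hji ih hmin c h
  replace ih := ih fun k h₁ h₂ => hmin k h₁ (by omega)
  cases h with
  | start => omega
  | int h hw hk hs ht =>
    obtain ⟨q₁, δ, μ, rfl, h₁, h₂⟩ := ih _ h
    exact ⟨q₁, δ, μ, rfl, h₁, h₂.int hw hk hs ht⟩
  | call h hw hk hs ht =>
    obtain ⟨q₁, δ, μ, rfl, h₁, h₂⟩ := ih _ h
    exact ⟨q₁, δ, _ :: μ, rfl, h₁, h₂.call hw hk hs ht⟩
  | ret h hw hk hs ht =>
    obtain ⟨q₁, δ, μ, hμ, h₁, h₂⟩ := ih _ h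
    cases μ with
    | nil => exact absurd (hmin (i + 1) (by omega) le_rfl) (h₂.height_succ_lt hw hk hpos).not_ge
    | cons s μ =>
      cases hμ
      exact ⟨q₁, δ, μ, rfl, h₁, h₂.ret hw hk hs ht⟩

end Decompose

namespace ECIDPDA

variable {Q Γ : Type} (M : ECIDPDA A Q Γ) [Fintype M.atomicSet]

noncomputable def guard (T : Set M.atomicSet) : ClockConstraint A :=
  charConstraint (Finset.univ : Finset M.atomicSet).toList T

theorem sat_guard_iff {lab : A → SymbolKind} {w : List (A × ℝ)} {i : ℕ} {T : Set M.atomicSet} :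
    Sat lab w i (M.guard T) ↔ T = trueAtoms M.atomicSet lab w i :=
  sat_charConstraint_iff_eq Finset.mem_toList_univ

theorem guard_injective : Function.Injective M.guard :=
  charConstraint_injective Finset.mem_toList_univ

theorem atoms_guard_subset (T : Set M.atomicSet) : (M.guard T).atoms ⊆ M.atomicSet :=
  atoms_charConstraint_subset (fun _ => M.atoms_subset_atomicSet_of_mem) _ T

end ECIDPDA

section Determinization

variable {Q Γ : Type} (lab : A → SymbolKind) (M : ECIDPDA A Q Γ)

abbrev DetStack := Set (Q × Q) × {a : A // lab a = SymbolKind.call} × Set M.atomicSet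

def intStep (a : A) (S : Set (Q × Q)) (T : Set M.atomicSet) : Set (Q × Q) :=
  {p | ∃ q φ, (p.1, q) ∈ S ∧ Eval T φ ∧ p.2 ∈ M.δint a q φ}

def callStep (a : A) (S : Set (Q × Q)) (T : Set M.atomicSet) : Set (Q × Q) :=
  {p | p.1 = p.2 ∧ ∃ q₀ q φ γ, (q₀, q) ∈ S ∧ Eval T φ ∧ (p.1, γ) ∈ M.δcall a q φ}

def retStepTop (a : A) (S : Set (Q × Q)) (T : Set M.atomicSet) : Set (Q × Q) :=
  {p | ∃ q φ, (p.1, q) ∈ S ∧ Eval T φ ∧ p.2 ∈ M.δret a none q φ}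

def retStepPop (a : A) (t : DetStack lab M) (S : Set (Q × Q)) (T : Set M.atomicSet) :
    Set (Q × Q) :=
  {p | ∃ q₁ q₂ q₃ γ φc φr, (p.1, q₁) ∈ t.1 ∧ Eval t.2.2 φc ∧
    (q₂, γ) ∈ M.δcall t.2.1.1 q₁ φc ∧ (q₂, q₃) ∈ S ∧ Eval T φr ∧
    p.2 ∈ M.δret a (some γ) q₃ φr}

def retStep (a : A) : Option (DetStack lab M) → Set (Q × Q) → Set M.atomicSet → Set (Q × Q)
  | none => retStepTop M a
  | some t => retStepPop lab M a t

variable [Fintype M.atomicSet]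

noncomputable def detAut : ECIDPDA A (Set (Q × Q)) (DetStack lab M) where
  init := {{p | p.1 ∈ M.init ∧ p.1 = p.2}}
  final := {S | ∃ p ∈ S, p.2 ∈ M.final}
  δint a S φ := {S' | ∃ T, φ = M.guard T ∧ S' = intStep M a S T}
  δcall a S φ := {x | ∃ T, ∃ h : lab a = .call, φ = M.guard T ∧
    x = (callStep M a S T, S, ⟨a, h⟩, T)}
  δret a t S φ := {S' | ∃ T, φ = M.guard T ∧ S' = retStep lab M a t S T}

theorem detAut_deterministic : (detAut lab M).Deterministic lab := by
  have excl : ∀ {w i} {T T' : Set M.atomicSet}, M.guard T ≠ M.guard T' →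
      ¬ (Sat lab w i (M.guard T) ∧ Sat lab w i (M.guard T')) := fun hne ⟨hs, hs'⟩ =>
    hne (by rw [M.sat_guard_iff.mp hs, M.sat_guard_iff.mp hs'])
  refine ⟨⟨_, rfl⟩, ?_, ?_, ?_, ?_, ?_, ?_⟩
  · rintro a S φ _ ⟨T, rfl, rfl⟩ _ ⟨T', hT, rfl⟩
    rw [M.guard_injective hT]
  · rintro a S φ _ ⟨T, _, rfl, rfl⟩ _ ⟨T', _, hT, rfl⟩
    rw [M.guard_injective hT]
  · rintro a t S φ _ ⟨T, rfl, rfl⟩ _ ⟨T', hT, rfl⟩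
    rw [M.guard_injective hT]
  · rintro a S φ φ' hne ⟨_, T, rfl, -⟩ ⟨_, T', rfl, -⟩ w i - -
    exact excl hne
  · rintro a S φ φ' hne ⟨_, T, -, rfl, -⟩ ⟨_, T', -, rfl, -⟩ w i - -
    exact excl hne
  · rintro a t S φ φ' hne ⟨_, T, rfl, -⟩ ⟨_, T', rfl, -⟩ w i - -
    exact excl hne

theorem atoms_subset_of_mem_used_detAut {φ : ClockConstraint A} (h : φ ∈ (detAut lab M).used) :
    φ.atoms ⊆ M.atomicSet := by
  rcases h with ⟨-, -, -, T, rfl, -⟩ | ⟨-, -, -, T, -, rfl, -⟩ | ⟨-, -, -, -, T, rfl, -⟩ <;>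
    exact M.atoms_guard_subset T

end Determinization

namespace ECIDPDA

variable {Q Γ : Type} (M : ECIDPDA A Q Γ) (lab : A → SymbolKind) (w : List (A × ℝ))

def summaries (j i : ℕ) : Set (Q × Q) :=
  {p | p.1 ∈ M.reachable lab w j ∧ LocalReach lab M w j p.1 i (p.2, [])}

theorem reachable_zero : M.reachable lab w 0 = M.init := by
  ext q
  constructor
  · rintro ⟨γ, h⟩
    cases h with
    | start hq => exact hq
  · exact fun hq => ⟨[], .start hq⟩

end ECIDPDA

section Invariant

variable {Q Γ : Type} (lab : A → SymbolKind) (M : ECIDPDA A Q Γ) (w : List (A × ℝ))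

/-- The simulation invariant. The top stack symbol `t` records the pair set, the letter and the
true atoms at the pending call `cp`, and `S` is the set of summaries of well-matched runs from
`cp + 1` to `i`. -/
def DetInv : ℕ → Set (Q × Q) → List (DetStack lab M) → Prop
  | i, S, [] => height lab w i = 0 ∧ Prod.snd '' S = M.reachable lab w i
  | i, S, t :: σ => ∃ cp < i, (∃ τ, w[cp]? = some (t.2.1.1, τ)) ∧
      t.2.2 = trueAtoms M.atomicSet lab w cp ∧ DetInv cp t.1 σ ∧
      height lab w (cp + 1) = σ.length + 1 ∧ height lab w i = σ.length + 1 ∧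
      (∀ k, cp + 1 ≤ k → k ≤ i → height lab w (cp + 1) ≤ height lab w k) ∧
      S = M.summaries lab w (cp + 1) i

variable {lab M w} {i : ℕ} {S : Set (Q × Q)} {σ : List (DetStack lab M)}

theorem DetInv.height_eq (h : DetInv lab M w i S σ) : height lab w i = σ.length := by
  cases σ with
  | nil => exact h.1
  | cons t σ => obtain ⟨cp, -, -, -, -, -, h, -⟩ := h; exact h

theorem DetInv.image_snd (h : DetInv lab M w i S σ) :
    Prod.snd '' S = M.reachable lab w i := by
  cases σ with
  | nil => exact h.2
  | cons t σ =>
    obtain ⟨cp, hcp, -, -, -, hcp₁, hi, hmin, rfl⟩ := h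
    ext q
    constructor
    · rintro ⟨p, ⟨⟨δ, h₁⟩, h₂⟩, rfl⟩
      exact ⟨_, Reach.of_localReach h₁ h₂⟩
    · rintro ⟨γ, hr⟩
      obtain ⟨q₁, δ, μ, -, h₁, h₂⟩ := Reach.decompose (hcp₁ ▸ Nat.succ_pos _) i hcp hmin _ hr
      obtain rfl := h₂.eq_nil_of_height_eq (by rw [hi, hcp₁])
      exact ⟨(q₁, q), ⟨⟨δ, h₁⟩, h₂⟩, rfl⟩

end Invariant

section Steps

open ECIDPDA

variable {Q Γ : Type} {lab : A → SymbolKind} {M : ECIDPDA A Q Γ} {w : List (A × ℝ)}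
  {i : ℕ} {S : Set (Q × Q)} {σ : List (DetStack lab M)} {p : A × ℝ}

local notation "Tᵢ" => trueAtoms (ECIDPDA.atomicSet M) lab w i

theorem DetInv.int (h : DetInv lab M w i S σ) (hw : w[i]? = some p) (hk : lab p.1 = .int) :
    DetInv lab M w (i + 1) (intStep M p.1 S Tᵢ) σ := by
  have hh := height_succ_of_int hw hk
  cases σ with
  | nil =>
    refine ⟨hh.trans h.1, ?_⟩
    ext q'
    constructor
    · rintro ⟨⟨q₀, _⟩, ⟨q, φ, hS, he, ht⟩, rfl⟩
      obtain ⟨γ, hr⟩ : q ∈ M.reachable lab w i := h.image_snd ▸ ⟨_, hS, rfl⟩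
      exact ⟨γ, hr.int hw hk ((eval_iff_sat (mem_used_of_mem_δint ht)).mp he) ht⟩
    · rintro ⟨γ, hr⟩
      obtain ⟨q, φ, hr, hs, ht⟩ := hr.inv_int hw hk
      obtain ⟨⟨q₀, _⟩, hS, rfl⟩ : q ∈ Prod.snd '' S := h.image_snd ▸ ⟨γ, hr⟩
      exact ⟨(q₀, q'), ⟨_, φ, hS, (eval_iff_sat (mem_used_of_mem_δint ht)).mpr hs, ht⟩, rfl⟩
  | cons t σ =>
    obtain ⟨cp, hcp, hwcp, hT, hIcp, hcp₁, hi, hmin, rfl⟩ := h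
    refine ⟨cp, by omega, hwcp, hT, hIcp, hcp₁, hh.trans hi, fun k h₁ h₂ => ?_, ?_⟩
    · rcases Nat.lt_or_eq_of_le h₂ with h₂ | rfl
      · exact hmin k h₁ (by omega)
      · rw [hh, hi, hcp₁]
    ext ⟨q₀, q'⟩
    constructor
    · rintro ⟨q, φ, ⟨hq₀, hl⟩, he, ht⟩
      exact ⟨hq₀, hl.int hw hk ((eval_iff_sat (mem_used_of_mem_δint ht)).mp he) ht⟩
    · rintro ⟨hq₀, hl⟩
      obtain ⟨q, φ, hl, hs, ht⟩ := hl.inv_int hcp hw hk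
      exact ⟨q, φ, ⟨hq₀, hl⟩, (eval_iff_sat (mem_used_of_mem_δint ht)).mpr hs, ht⟩

theorem DetInv.call (h : DetInv lab M w i S σ) (hw : w[i]? = some p) (hk : lab p.1 = .call) :
    DetInv lab M w (i + 1) (callStep M p.1 S Tᵢ) ((S, ⟨p.1, hk⟩, Tᵢ) :: σ) := by
  have hh : height lab w (i + 1) = σ.length + 1 := by
    rw [height_succ_of_call hw hk, h.height_eq]
  refine ⟨i, i.lt_succ_self, ⟨p.2, hw⟩, rfl, h, hh, hh,
    fun k h₁ h₂ => by rw [Nat.le_antisymm h₂ h₁], ?_⟩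
  ext ⟨q₂, q₃⟩
  constructor
  · rintro ⟨(rfl : q₂ = q₃), q₀, q, φ, γ, hS, he, ht⟩
    obtain ⟨γ₀, hr⟩ : q ∈ M.reachable lab w i := h.image_snd ▸ ⟨_, hS, rfl⟩
    exact ⟨⟨_, hr.call hw hk ((eval_iff_sat (mem_used_of_mem_δcall ht)).mp he) ht⟩, .start⟩
  · rintro ⟨⟨δ, hr⟩, hl⟩
    cases hl.eq_of_self
    obtain ⟨s, γ₀, q, φ, -, hr, hs, ht⟩ := hr.inv_call hw hk
    obtain ⟨⟨q₀, _⟩, hS, rfl⟩ : q ∈ Prod.snd '' S := h.image_snd ▸ ⟨γ₀, hr⟩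
    exact ⟨rfl, q₀, _, φ, s, hS, (eval_iff_sat (mem_used_of_mem_δcall ht)).mpr hs, ht⟩

theorem DetInv.retEmpty (h : DetInv lab M w i S []) (hw : w[i]? = some p) (hk : lab p.1 = .ret) :
    DetInv lab M w (i + 1) (retStepTop M p.1 S Tᵢ) [] := by
  refine ⟨by rw [height_succ_of_ret hw hk, h.1], ?_⟩
  ext q'
  constructor
  · rintro ⟨⟨q₀, _⟩, ⟨q, φ, hS, he, ht⟩, rfl⟩
    obtain ⟨γ, hr⟩ : q ∈ M.reachable lab w i := h.image_snd ▸ ⟨_, hS, rfl⟩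
    obtain rfl : γ = [] := List.eq_nil_of_length_eq_zero (hr.length_eq_height.trans h.1)
    exact ⟨[], hr.retEmpty hw hk ((eval_iff_sat (mem_used_of_mem_δret ht)).mp he) ht⟩
  · rintro ⟨γ, hr⟩
    obtain ⟨q, φ, hr, hs, ht⟩ := hr.inv_ret_of_height_eq_zero hw hk h.1
    obtain ⟨⟨q₀, _⟩, hS, rfl⟩ : q ∈ Prod.snd '' S := h.image_snd ▸ ⟨[], hr⟩
    exact ⟨(q₀, q'), ⟨_, φ, hS, (eval_iff_sat (mem_used_of_mem_δret ht)).mpr hs, ht⟩, rfl⟩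

theorem DetInv.ret_of_top {t : DetStack lab M} (h : DetInv lab M w i S [t])
    (hw : w[i]? = some p) (hk : lab p.1 = .ret) :
    DetInv lab M w (i + 1) (retStepPop lab M p.1 t S Tᵢ) [] := by
  obtain ⟨cp, hcp, ⟨τ, hwcp⟩, hT, ⟨-, himage⟩, hcp₁, hi, hmin, rfl⟩ := h
  have hkcp : lab t.2.1.1 = .call := t.2.1.2
  refine ⟨by rw [height_succ_of_ret hw hk, hi]; rfl, ?_⟩
  ext q'
  constructor
  · rintro ⟨⟨q₀, _⟩, ⟨q₁, q₂, q₃, γ, φc, φr, h₁, hec, htc, ⟨-, hl⟩, her, htr⟩, rfl⟩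
    obtain ⟨γ₀, hr₁⟩ : q₁ ∈ M.reachable lab w cp := himage ▸ ⟨_, h₁, rfl⟩
    have hsc := (eval_iff_sat (mem_used_of_mem_δcall htc)).mp (hT ▸ hec)
    have hr₃ := Reach.of_localReach (hr₁.call hwcp hkcp hsc htc) hl
    exact ⟨γ₀, hr₃.ret hw hk ((eval_iff_sat (mem_used_of_mem_δret htr)).mp her) htr⟩
  · rintro ⟨γ, hr⟩
    obtain ⟨s, q₃, φr, hr₃, hsr, htr⟩ := hr.inv_ret_of_height_pos hw hk (by rw [hi]; omega)
    obtain ⟨q₂, δ, μ, hμ, hr₂, hl⟩ := Reach.decompose (hcp₁ ▸ Nat.succ_pos _) i hcp hmin _ hr₃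
    obtain rfl := hl.eq_nil_of_height_eq (by rw [hi, hcp₁])
    obtain rfl : s :: γ = δ := hμ
    obtain ⟨s', γ₀, q₁, φc, hγ, hr₁, hsc, htc⟩ := hr₂.inv_call hwcp hkcp
    cases hγ
    obtain ⟨⟨q₀, _⟩, h₁, rfl⟩ : q₁ ∈ Prod.snd '' t.1 := himage ▸ ⟨γ, hr₁⟩
    exact ⟨(q₀, q'), ⟨_, q₂, q₃, s, φc, φr, h₁,
      hT ▸ (eval_iff_sat (mem_used_of_mem_δcall htc)).mpr hsc, htc, ⟨⟨_, hr₂⟩, hl⟩,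
      (eval_iff_sat (mem_used_of_mem_δret htr)).mpr hsr, htr⟩, rfl⟩

theorem DetInv.ret_of_nested {t t' : DetStack lab M} (h : DetInv lab M w i S (t :: t' :: σ))
    (hw : w[i]? = some p) (hk : lab p.1 = .ret) :
    DetInv lab M w (i + 1) (retStepPop lab M p.1 t S Tᵢ) (t' :: σ) := by
  obtain ⟨cp, hcp, ⟨τ, hwcp⟩, hT, hIcp, hcp₁, hi, hmin, rfl⟩ := h
  obtain ⟨cp', hcp', hwcp', hT', hIcp', hcp₁', hcpi, hmin', ht₁⟩ := hIcp
  have hkcp : lab t.2.1.1 = .call := t.2.1.2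
  simp only [List.length_cons] at hcp₁ hi
  have hi' : height lab w (i + 1) = σ.length + 1 := by rw [height_succ_of_ret hw hk, hi]; rfl
  refine ⟨cp', by omega, hwcp', hT', hIcp', hcp₁', hi', fun k h₁ h₂ => ?_, ?_⟩
  · rcases le_or_gt k cp with hkcp' | hkcp'
    · exact hmin' k h₁ hkcp'
    rcases Nat.lt_or_eq_of_le h₂ with h₂ | rfl
    · have := hmin k hkcp' (by omega)
      omega
    · rw [hi', hcp₁']
  ext ⟨q₀, q'⟩
  constructor
  · rintro ⟨q₁, q₂, q₃, γ, φc, φr, h₁, hec, htc, ⟨-, hl⟩, her, htr⟩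
    obtain ⟨hq₀, hl₁⟩ : (q₀, q₁) ∈ M.summaries lab w (cp' + 1) cp := ht₁ ▸ h₁
    have hsc := (eval_iff_sat (mem_used_of_mem_δcall htc)).mp (hT ▸ hec)
    have hl₃ := (hl₁.call hwcp hkcp hsc htc).trans hl
    exact ⟨hq₀, hl₃.ret hw hk ((eval_iff_sat (mem_used_of_mem_δret htr)).mp her) htr⟩
  · rintro ⟨hq₀, hl⟩
    obtain ⟨s, q₃, φr, hl₃, hsr, htr⟩ := hl.inv_ret (by omega) hw hk
    obtain ⟨q₂, δ, μ, hμ, hl₂, hl₂₃⟩ :=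
      LocalReach.decompose (by omega) (hcp₁ ▸ Nat.succ_pos _) i hcp hmin _ hl₃
    obtain rfl := hl₂₃.eq_nil_of_height_eq (by rw [hi, hcp₁])
    obtain rfl : [s] = δ := hμ
    obtain ⟨s', γ₀, q₁, φc, hγ, hl₁, hsc, htc⟩ := hl₂.inv_call (by omega) hwcp hkcp
    cases hγ
    have hq₂ : q₂ ∈ M.reachable lab w (cp + 1) :=
      let ⟨δ, hr⟩ := hq₀
      ⟨_, Reach.of_localReach hr hl₂⟩
    exact ⟨q₁, q₂, q₃, s, φc, φr, ht₁ ▸ ⟨hq₀, hl₁⟩,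
      hT ▸ (eval_iff_sat (mem_used_of_mem_δcall htc)).mpr hsc, htc, ⟨hq₂, hl₂₃⟩,
      (eval_iff_sat (mem_used_of_mem_δret htr)).mpr hsr, htr⟩

theorem DetInv.ret {t : DetStack lab M} (h : DetInv lab M w i S (t :: σ)) (hw : w[i]? = some p)
    (hk : lab p.1 = .ret) : DetInv lab M w (i + 1) (retStepPop lab M p.1 t S Tᵢ) σ := by
  cases σ with
  | nil => exact h.ret_of_top hw hk
  | cons t' σ => exact h.ret_of_nested hw hk

end Steps

section Correctness

variable {Q Γ : Type} {lab : A → SymbolKind} {M : ECIDPDA A Q Γ} [Fintype M.atomicSet]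
  {w : List (A × ℝ)}

theorem detInv_of_reach_detAut {i : ℕ} {c : Set (Q × Q) × List (DetStack lab M)}
    (h : Reach lab (detAut lab M) w i c) : DetInv lab M w i c.1 c.2 := by
  induction h with
  | start hS =>
    cases Set.mem_singleton_iff.mp hS
    refine ⟨rfl, ?_⟩
    ext q
    simp [M.reachable_zero]
  | int _ hw hk hs ht ih =>
    obtain ⟨T, rfl, rfl⟩ := ht
    cases M.sat_guard_iff.mp hs
    exact ih.int hw hk
  | call _ hw hk hs ht ih =>
    obtain ⟨T, _, rfl, hx⟩ := ht
    cases M.sat_guard_iff.mp hs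
    cases hx
    exact ih.call hw hk
  | ret _ hw hk hs ht ih =>
    obtain ⟨T, rfl, rfl⟩ := ht
    cases M.sat_guard_iff.mp hs
    exact ih.ret hw hk
  | retEmpty _ hw hk hs ht ih =>
    obtain ⟨T, rfl, rfl⟩ := ht
    cases M.sat_guard_iff.mp hs
    exact ih.retEmpty hw hk

theorem exists_reach_detAut :
    ∀ i ≤ w.length, ∃ c, Reach lab (detAut lab M) w i c
  | 0, _ => ⟨_, .start rfl⟩
  | i + 1, hi => by
    obtain ⟨⟨S, σ⟩, hr⟩ := exists_reach_detAut i (by omega)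
    have hw : w[i]? = some w[i] := List.getElem?_eq_getElem hi
    have hs : Sat lab w i (M.guard (trueAtoms M.atomicSet lab w i)) := M.sat_guard_iff.mpr rfl
    cases hk : lab w[i].1 with
    | int => exact ⟨_, hr.int hw hk hs ⟨_, rfl, rfl⟩⟩
    | call => exact ⟨_, hr.call hw hk hs ⟨_, hk, rfl, rfl⟩⟩
    | ret =>
      cases σ with
      | nil => exact ⟨_, hr.retEmpty hw hk hs ⟨_, rfl, rfl⟩⟩
      | cons t σ => exact ⟨_, hr.ret hw hk hs ⟨_, rfl, rfl⟩⟩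

theorem accepts_detAut_iff : (detAut lab M).Accepts lab w ↔ M.Accepts lab w := by
  constructor
  · rintro ⟨S, σ, hr, p, hp, hf⟩
    obtain ⟨γ, hγ⟩ : p.2 ∈ M.reachable lab w w.length :=
      (detInv_of_reach_detAut hr).image_snd ▸ ⟨p, hp, rfl⟩
    exact ⟨p.2, γ, hγ, hf⟩
  · rintro ⟨q, γ, hr, hq⟩
    obtain ⟨c, hc⟩ := exists_reach_detAut (lab := lab) (M := M) w.length le_rfl
    obtain ⟨p, hp, rfl⟩ : q ∈ Prod.snd '' c.1 := (detInv_of_reach_detAut hc).image_snd ▸ ⟨γ, hr⟩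
    exact ⟨c.1, c.2, hc, p, hp, hq⟩

end Correctness

end

theorem ecidpda_determinization_general {A Q Γ : Type}
    (lab : A → SymbolKind) (M : ECIDPDA A Q Γ) (hfin : M.used.Finite) :
    ∃ B : ECIDPDA A (Set (Q × Q))
        (Set (Q × Q) × {a : A // lab a = SymbolKind.call} × Set (↥M.atomicSet)),
      ECIDPDA.Deterministic lab B ∧
      (∀ φ ∈ B.used, φ.atoms ⊆ M.atomicSet) ∧
      (∀ w : List (A × ℝ), IsTimed w →
        (ECIDPDA.Accepts lab B w ↔ ECIDPDA.Accepts lab M w)) := by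
  have := (M.atomicSet_finite hfin).fintype
  exact ⟨detAut lab M, detAut_deterministic lab M,
    fun _ => atoms_subset_of_mem_used_detAut lab M, fun _ _ => accepts_detAut_iff⟩

/-- **Direct determinization of event-clock input-driven pushdown
automata.**  Let `M` be a nondeterministic ECIDPDA with state set `Q`,
stack alphabet `Γ`, and let `Ψ = M.atomicSet` be the (finite) set of
atomic clock constraints occurring in the clock constraints used in its
transitions.  Then there exists a deterministic ECIDPDA `B` with set of
states `2^{Q×Q}` and pushdown alphabet `2^{Q×Q} × Σ₊₁ × 2^Ψ`, all of
whose clock constraints are Boolean combinations of atomic constraints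
from `Ψ`, recognizing the same set of timed strings as `M`.  (In
particular, an `n`-state nondeterministic automaton with `k` atomic
clock constraints is simulated by a deterministic one with `2^(n²)`
states and `|Σ₊₁|·2^(n²+k)` stack symbols.) -/
theorem ecidpda_determinization {A Q Γ : Type} [Finite A] [Finite Q] [Finite Γ]
    (lab : A → SymbolKind) (M : ECIDPDA A Q Γ) (hfin : M.used.Finite) :
    ∃ B : ECIDPDA A (Set (Q × Q))
        (Set (Q × Q) × {a : A // lab a = SymbolKind.call} × Set (↥M.atomicSet)),
      ECIDPDA.Deterministic lab B ∧
      (∀ φ ∈ B.used, φ.atoms ⊆ M.atomicSet) ∧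
      (∀ w : List (A × ℝ), IsTimed w →
        (ECIDPDA.Accepts lab B w ↔ ECIDPDA.Accepts lab M w)) :=
  ecidpda_determinization_general lab M hfin
end

section
/- Let A = (Σ₊₁, Σ₀, Σ₋₁, Q, Q₀, Γ, ⟨δ_a⟩_{a∈Σ}, F) be a nondeterministic event-clock input-driven pushdown automaton, let Ψ₀ be the set of atomic stack prediction constraints (those referring to the stack prediction clock ▷s) used in its transitions, and let Ψ be the set of all other atomic constraints used in its transitions. Then there exists a deterministic event-clock input-driven pushdown automaton B with set of states Q' = 2^{Q×Q} × 2^Q and pushdown alphabet Γ' = 2^{Q×Q} × 2^Q × Σ₊₁ × 2^{Ψ}, which never uses the stack prediction clock ▷s in any of its clock constraints, and which recognizes the same set of timed strings as A. -/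
/-!
At a call, a deterministic automaton cannot yet evaluate a constraint on `▷s`, because the
matching return is still to come; but at that return `◁s` has exactly the value `▷s` had at the
call. So we run the subset construction for input-driven automata (a state holds the summary of
the current well-nested stretch and the set of reachable states, a call pushes them) and delay
each call transition to its matching return, where `▷s` is read off `◁s`; the truth values of
the other atoms of the call guard are pushed at the call. After `i` symbols the new automaton
holds the summaries and reachable states of the runs in which `▷s` sees only the returns among
the first `i` symbols; at the end of the word these are the actual runs.

The new automaton is deterministic because it reads, at each position, the exact values of all
the other clocks: it has one guard per such valuation, and distinct ones exclude each other.
-/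
section

variable {A Q Γ : Type}

namespace IsTimed

variable {w : List (A × ℝ)}

theorem lt (ht : IsTimed w) {i j : ℕ} (hij : i < j) {p r : A × ℝ}
    (hp : w[i]? = some p) (hr : w[j]? = some r) : p.2 < r.2 := by
  obtain ⟨hi, rfl⟩ := List.getElem?_eq_some_iff.mp hp
  obtain ⟨hj, rfl⟩ := List.getElem?_eq_some_iff.mp hr
  have := List.pairwise_iff_getElem.mp (List.isChain_iff_pairwise.mp ht) i j
    (by simpa using hi) (by simpa using hj) hij
  rwa [List.getElem_map, List.getElem_map] at this

end IsTimed

section PendingCalls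

variable (lab : A → SymbolKind) (w : List (A × ℝ))

def kindAt (m : ℕ) : Option SymbolKind := w[m]?.map (lab ·.1)

def stackUpdate (m : ℕ) : Option SymbolKind → List ℕ → List ℕ
  | some .call, s => m :: s
  | some .ret, s => s.tail
  | _, s => s

/-- The calls in `[x, m)` that are unmatched within `[x, m)`, the most recent first. -/
def pendingCalls (x : ℕ) : ℕ → List ℕ
  | 0 => []
  | m + 1 => if m < x then [] else stackUpdate m (kindAt lab w m) (pendingCalls x m)

def symbolsIn (x b : ℕ) : List A := ((w.map Prod.fst).drop x).take (b - x)

def NoUnderflow (x b : ℕ) : Prop :=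
  ∀ m, x ≤ m → m < b → kindAt lab w m = some .ret → pendingCalls lab w x m ≠ []

variable {lab w}

theorem kindAt_eq_some_iff {m : ℕ} {k : SymbolKind} :
    kindAt lab w m = some k ↔ ∃ p, w[m]? = some p ∧ lab p.1 = k := by
  simp [kindAt]

theorem kindAt_of_getElem? {m : ℕ} {p : A × ℝ} {k : SymbolKind} (hp : w[m]? = some p)
    (hk : lab p.1 = k) : kindAt lab w m = some k :=
  kindAt_eq_some_iff.mpr ⟨p, hp, hk⟩

theorem kindAt_of_lt {m : ℕ} (hm : m < w.length) : kindAt lab w m = some (lab w[m].1) :=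
  kindAt_of_getElem? (List.getElem?_eq_getElem hm) rfl

theorem stackUpdate_append {m : ℕ} {k : Option SymbolKind} {s : List ℕ} (t : List ℕ)
    (h : k = some .ret → s ≠ []) : stackUpdate m k (s ++ t) = stackUpdate m k s ++ t := by
  rcases k with _ | _ | _ | _ <;> simp only [stackUpdate, List.cons_append]
  obtain ⟨_, _, rfl⟩ := List.exists_cons_of_ne_nil (h rfl)
  rfl

theorem mem_of_mem_stackUpdate {m c : ℕ} {k : Option SymbolKind} {s : List ℕ}
    (h : c ∈ stackUpdate m k s) : c ∈ s ∨ (c = m ∧ k = some .call) := by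
  rcases k with _ | _ | _ | _ <;> simp only [stackUpdate, List.mem_cons] at h
  exacts [.inl h, h.imp_left (⟨·, rfl⟩) |>.symm, .inl (List.mem_of_mem_tail h), .inl h]

theorem pendingCalls_of_le {x m : ℕ} (h : m ≤ x) : pendingCalls lab w x m = [] := by
  cases m with
  | zero => rfl
  | succ m => simp [pendingCalls, Nat.lt_of_succ_le h]

theorem pendingCalls_succ {x m : ℕ} (hx : x ≤ m) :
    pendingCalls lab w x (m + 1) = stackUpdate m (kindAt lab w m) (pendingCalls lab w x m) := by
  simp [pendingCalls, Nat.not_lt.mpr hx]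

theorem of_mem_pendingCalls {x m c : ℕ} (h : c ∈ pendingCalls lab w x m) :
    x ≤ c ∧ c < m ∧ kindAt lab w c = some .call := by
  induction m with
  | zero => simp [pendingCalls] at h
  | succ m ih =>
    by_cases hx : m < x
    · simp [pendingCalls, hx] at h
    rw [pendingCalls_succ (Nat.le_of_not_lt hx)] at h
    rcases mem_of_mem_stackUpdate h with h | ⟨rfl, hk⟩
    · exact (ih h).imp_right (And.imp_left (Nat.lt_succ_of_lt ·))
    · exact ⟨Nat.le_of_not_lt hx, Nat.lt_succ_self c, hk⟩

theorem mem_pendingCalls_of_le {x m m' c : ℕ} (h : c ∈ pendingCalls lab w x m') (hm : m ≤ m')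
    (hc : c < m) : c ∈ pendingCalls lab w x m := by
  induction m', hm using Nat.le_induction with
  | base => exact h
  | succ m' hm ih =>
    apply ih
    rw [pendingCalls_succ ((of_mem_pendingCalls h).1.trans (by omega))] at h
    rcases mem_of_mem_stackUpdate h with h | ⟨rfl, -⟩
    · exact h
    · omega

theorem pendingCalls_eq_append {x c M m : ℕ} (hc : c ∈ pendingCalls lab w x M) (hcm : c < m)
    (hmM : m ≤ M) :
    pendingCalls lab w x m = pendingCalls lab w (c + 1) m ++ c :: pendingCalls lab w x c := by
  obtain ⟨hxc, -, hcall⟩ := of_mem_pendingCalls hc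
  induction m, hcm using Nat.le_induction with
  | base => rw [pendingCalls_succ hxc, hcall, pendingCalls_of_le le_rfl]; rfl
  | succ m hcm ih =>
    have ih := ih (by omega)
    rw [pendingCalls_succ (by omega), pendingCalls_succ hcm, ih, stackUpdate_append]
    intro hret hnil
    have hmem := mem_pendingCalls_of_le hc hmM (by omega : c < m + 1)
    rw [pendingCalls_succ (by omega), ih, hret, hnil] at hmem
    exact (of_mem_pendingCalls hmem).2.1.false

theorem NoUnderflow.mono {x b b' : ℕ} (h : NoUnderflow lab w x b) (hb : b' ≤ b) :
    NoUnderflow lab w x b' :=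
  fun m h₁ h₂ => h m h₁ (by omega)

/-- As `c` is still pending at `M`, no return before `M` pops it. -/
theorem noUnderflow_of_mem_pendingCalls {x c M : ℕ} (hc : c ∈ pendingCalls lab w x M) :
    NoUnderflow lab w (c + 1) M := by
  intro m hcm hmM hret hnil
  have hxc := (of_mem_pendingCalls hc).1
  have hmem := mem_pendingCalls_of_le hc hmM (by omega : c < m + 1)
  rw [pendingCalls_succ (by omega), pendingCalls_eq_append hc hcm hmM.le, hret, hnil] at hmem
  exact (of_mem_pendingCalls hmem).2.1.false

theorem pendingCalls_eq_cons {x m c : ℕ} {ps : List ℕ} (h : pendingCalls lab w x m = c :: ps) :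
    ps = pendingCalls lab w x c ∧ pendingCalls lab w (c + 1) m = [] := by
  have hc : c ∈ pendingCalls lab w x m := h ▸ List.mem_cons_self
  have hsplit := pendingCalls_eq_append hc (of_mem_pendingCalls hc).2.1 le_rfl
  rw [h] at hsplit
  rcases hnil : pendingCalls lab w (c + 1) m with _ | ⟨y, t⟩
  · simp_all
  · have := (of_mem_pendingCalls (hnil ▸ List.mem_cons_self : y ∈ _)).1
    rw [hnil, List.cons_append, List.cons.injEq] at hsplit
    omega

theorem symbolsIn_append {x m b : ℕ} (hxm : x ≤ m) (hmb : m ≤ b) :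
    symbolsIn w x b = symbolsIn w x m ++ symbolsIn w m b := by
  rw [symbolsIn, show b - x = (m - x) + (b - m) by omega, List.take_add, List.drop_drop,
    Nat.add_sub_cancel' hxm]
  rfl

theorem symbolsIn_succ {x m : ℕ} (hxm : x ≤ m) (hm : m < w.length) :
    symbolsIn w x (m + 1) = symbolsIn w x m ++ [w[m].1] := by
  rw [symbolsIn_append hxm m.le_succ]
  simp [symbolsIn, List.drop_eq_getElem_cons (by simpa using hm : m < (w.map Prod.fst).length)]

theorem symbolsIn_of_lt {x b : ℕ} (hxb : x < b) (hb : b ≤ w.length) :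
    symbolsIn w x b = w[x].1 :: symbolsIn w (x + 1) b := by
  rw [symbolsIn, List.drop_eq_getElem_cons (by simp; omega),
    show b - x = (b - (x + 1)) + 1 by omega, List.take_succ_cons]
  simp [symbolsIn]

theorem WellNested.append {u v : List A} (hu : WellNested lab u) (hv : WellNested lab v) :
    WellNested lab (u ++ v) := by
  induction hu with
  | nil => exact hv
  | int ha _ ih => exact .int ha ih
  | wrap ha hb hu _ _ ih => simpa using WellNested.wrap ha hb hu ih

theorem kindAt_of_cons_prefix {i₀ : ℕ} {a : A} {u : List A}
    (h : a :: u <+: (w.map Prod.fst).drop i₀) :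
    kindAt lab w i₀ = some (lab a) ∧ u <+: (w.map Prod.fst).drop (i₀ + 1) := by
  have hlen : i₀ < (w.map Prod.fst).length := by
    by_contra hc
    rw [List.drop_eq_nil_of_le (Nat.le_of_not_lt hc)] at h
    exact List.cons_ne_nil _ _ (List.prefix_nil.mp h)
  rw [List.drop_eq_getElem_cons hlen, List.cons_prefix_cons] at h
  refine ⟨kindAt_of_getElem? (List.getElem?_eq_getElem (by simpa using hlen)) ?_, h.2⟩
  simp [h.1]

theorem List.IsPrefix.drop_length {α : Type*} {u v l : List α} (h : u ++ v <+: l) :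
    v <+: l.drop u.length := by
  obtain ⟨t, rfl⟩ := h
  exact ⟨t, by simp⟩

theorem WellNested.pendingCalls_add_length {u : List A} (hu : WellNested lab u) {x i₀ : ℕ}
    (hx : x ≤ i₀) (hpre : u <+: (w.map Prod.fst).drop i₀) :
    pendingCalls lab w x (i₀ + u.length) = pendingCalls lab w x i₀ := by
  induction hu generalizing i₀ with
  | nil => rfl
  | @int a u ha _ ih =>
    obtain ⟨hk, hpre⟩ := kindAt_of_cons_prefix (lab := lab) hpre
    rw [List.length_cons, show i₀ + (u.length + 1) = i₀ + 1 + u.length by omega,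
      ih (by omega) hpre, pendingCalls_succ hx, hk, ha]
    rfl
  | @wrap a b u v ha hb _ _ ihu ihv =>
    obtain ⟨hka, hpre⟩ := kindAt_of_cons_prefix (lab := lab) hpre
    obtain ⟨hkb, hprev⟩ := kindAt_of_cons_prefix (lab := lab)
      (List.drop_drop (l := w.map Prod.fst) ▸ hpre.drop_length)
    calc pendingCalls lab w x (i₀ + (a :: u ++ b :: v).length)
        = pendingCalls lab w x (i₀ + 1 + u.length + 1 + v.length) := by
          congr 1
          simp only [List.length_cons, List.length_append]
          omega
      _ = pendingCalls lab w x i₀ := by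
        rw [ihv (by omega) hprev, pendingCalls_succ (by omega), hkb, hb,
          ihu (by omega) ((List.prefix_append _ _).trans hpre), pendingCalls_succ hx, hka, ha]
        rfl

theorem wellNested_symbolsIn {b : ℕ} (hb : b ≤ w.length) {x : ℕ} (hxb : x ≤ b)
    (hnil : pendingCalls lab w x b = []) (hne : NoUnderflow lab w x b) :
    WellNested lab (symbolsIn w x b) := by
  induction b using Nat.strong_induction_on generalizing x with
  | _ b ih =>
  rcases hxb.eq_or_lt with rfl | hxb
  · simpa [symbolsIn] using WellNested.nil
  obtain ⟨m, rfl⟩ : ∃ m, b = m + 1 := ⟨b - 1, by omega⟩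
  have hm : m < w.length := by omega
  have hxm : x ≤ m := by omega
  have hk := kindAt_of_lt (lab := lab) hm
  rw [symbolsIn_succ hxm hm]
  rw [pendingCalls_succ hxm, hk] at hnil
  rcases hlab : lab w[m].1 with _ | _ | _
  · simp [hlab, stackUpdate] at hnil
  · rw [hlab] at hnil hk
    obtain ⟨c, hc⟩ : ∃ c, pendingCalls lab w x m = [c] := by
      rcases h : pendingCalls lab w x m with _ | ⟨c, _ | _⟩
      · exact absurd h (hne m hxm (by omega) hk)
      · exact ⟨c, rfl⟩
      · simp [stackUpdate, h] at hnil
    have hcmem : c ∈ pendingCalls lab w x m := hc ▸ List.mem_singleton_self c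
    obtain ⟨hxc, hcm, hcall⟩ := of_mem_pendingCalls hcmem
    obtain ⟨hnilc, hnilint⟩ := pendingCalls_eq_cons hc
    rw [kindAt_of_lt (by omega), Option.some_inj] at hcall
    have hout := ih c (by omega) (by omega) hxc hnilc.symm (hne.mono (by omega))
    have hin := ih m (by omega) (by omega) hcm hnilint (noUnderflow_of_mem_pendingCalls hcmem)
    rw [symbolsIn_append hxc hcm.le, symbolsIn_of_lt hcm (by omega)]
    simpa using hout.append (.wrap hcall hlab hin .nil)
  · have hnil : pendingCalls lab w x m = [] := by simpa [hlab, stackUpdate] using hnil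
    exact (ih m (by omega) (by omega) hxm hnil (hne.mono (by omega))).append (.int hlab .nil)

namespace Matches

variable {c i : ℕ}

theorem wellNested_symbolsIn (h : Matches lab w c i) : WellNested lab (symbolsIn w (c + 1) i) := by
  rw [symbolsIn, ← Nat.sub_sub]
  exact h.2.2.2.2

theorem kindAt_left (h : Matches lab w c i) : kindAt lab w c = some .call :=
  let ⟨_, hp, hl⟩ := h.2.2.1
  kindAt_of_getElem? hp hl

theorem kindAt_right (h : Matches lab w c i) : kindAt lab w i = some .ret :=
  let ⟨_, hp, hl⟩ := h.2.2.2.1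
  kindAt_of_getElem? hp hl

theorem pendingCalls_eq (h : Matches lab w c i) {x : ℕ} (hx : x ≤ c) :
    pendingCalls lab w x i = c :: pendingCalls lab w x c := by
  have hlen : (symbolsIn w (c + 1) i).length = i - (c + 1) := by
    simp only [symbolsIn, List.length_take, List.length_drop, List.length_map]
    have := h.2.1
    omega
  have := h.wellNested_symbolsIn.pendingCalls_add_length (x := x) (i₀ := c + 1) (by omega)
    (List.take_prefix _ _)
  rw [hlen, show c + 1 + (i - (c + 1)) = i by have := h.1; omega] at this
  rw [this, pendingCalls_succ hx, h.kindAt_left]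
  rfl

theorem pendingCalls_succ_eq (h : Matches lab w c i) {x : ℕ} (hx : x ≤ c) :
    pendingCalls lab w x (i + 1) = pendingCalls lab w x c := by
  rw [pendingCalls_succ (hx.trans h.1.le), h.kindAt_right, h.pendingCalls_eq hx]
  rfl

theorem left_unique {c' : ℕ} (h : Matches lab w c i) (h' : Matches lab w c' i) : c = c' :=
  (List.cons.inj ((h.pendingCalls_eq (Nat.zero_le _)).symm.trans
    (h'.pendingCalls_eq (Nat.zero_le _)))).1

theorem right_unique {i' : ℕ} (h : Matches lab w c i) (h' : Matches lab w c i') : i = i' := by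
  by_contra hne
  wlog hlt : i < i' generalizing i i'
  · exact this h' h (Ne.symm hne) (by omega)
  have hc := mem_pendingCalls_of_le (h'.pendingCalls_eq (Nat.zero_le _) ▸ List.mem_cons_self) hlt
    (Nat.lt_succ_of_lt h.1)
  rw [h.pendingCalls_succ_eq (Nat.zero_le _)] at hc
  exact (of_mem_pendingCalls hc).2.1.false

theorem lt_of_mem_pendingCalls {p r : ℕ} (h : Matches lab w p r)
    (hc : c ∈ pendingCalls lab w 0 i) (hpc : p < c) (hri : r ≤ i) : r < c := by
  by_contra hcr
  rcases (Nat.le_of_not_lt hcr).eq_or_lt with hcr | hcr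
  · have := (of_mem_pendingCalls hc).2.2
    rw [hcr, h.kindAt_right] at this
    cases this
  have := mem_pendingCalls_of_le hc hri hcr
  rw [h.pendingCalls_eq (Nat.zero_le _), List.mem_cons] at this
  rcases this with rfl | this
  · exact hpc.false
  · exact absurd (of_mem_pendingCalls this).2.1 (by omega)

theorem take_iff {n j : ℕ} : Matches lab (w.take n) j i ↔ Matches lab w j i ∧ i < n := by
  have hsym : i ≤ n → (((w.take n).map Prod.fst).drop (j + 1)).take (i - j - 1) =
      ((w.map Prod.fst).drop (j + 1)).take (i - j - 1) := fun hin => by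
    rw [List.map_take, List.drop_take, List.take_take]
    congr 1
    omega
  simp only [Matches, List.length_take]
  constructor
  · rintro ⟨h1, h2, ⟨p, hp, hpc⟩, ⟨r, hr, hrc⟩, hwn⟩
    have hin : i < n := by omega
    rw [List.getElem?_take_of_lt (by omega)] at hp hr
    exact ⟨⟨h1, by omega, ⟨p, hp, hpc⟩, ⟨r, hr, hrc⟩, hsym hin.le ▸ hwn⟩, hin⟩
  · rintro ⟨⟨h1, h2, ⟨p, hp, hpc⟩, ⟨r, hr, hrc⟩, hwn⟩, hin⟩
    rw [← List.getElem?_take_of_lt (j := n) (by omega)] at hp hr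
    exact ⟨h1, by omega, ⟨p, hp, hpc⟩, ⟨r, hr, hrc⟩, (hsym hin.le).symm ▸ hwn⟩

end Matches

theorem matches_of_pendingCalls_eq_cons {c i : ℕ} {ps : List ℕ} (hi : i < w.length)
    (hret : kindAt lab w i = some .ret) (h : pendingCalls lab w 0 i = c :: ps) :
    Matches lab w c i := by
  have hc : c ∈ pendingCalls lab w 0 i := h ▸ List.mem_cons_self
  obtain ⟨-, hci, hcall⟩ := of_mem_pendingCalls hc
  obtain ⟨p, hp, hpc⟩ := kindAt_eq_some_iff.mp hcall
  obtain ⟨r, hr, hrr⟩ := kindAt_eq_some_iff.mp hret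
  refine ⟨hci, hi, ⟨p, hp, hpc⟩, ⟨r, hr, hrr⟩, ?_⟩
  rw [Nat.sub_sub]
  exact wellNested_symbolsIn hi.le hci (pendingCalls_eq_cons h).2
    (noUnderflow_of_mem_pendingCalls hc)

end PendingCalls

namespace ClockConstraint

def eval (cv : Clock A → ℝ → Prop) : ClockConstraint A → Prop
  | tt => True
  | le C τ => ∃ v, cv C v ∧ v ≤ τ
  | ge C τ => ∃ v, cv C v ∧ τ ≤ v
  | and φ ψ => φ.eval cv ∧ ψ.eval cv
  | or φ ψ => φ.eval cv ∨ ψ.eval cv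
  | not φ => ¬ φ.eval cv

def evalAtoms (f : ClockConstraint A → Prop) : ClockConstraint A → Prop
  | tt => True
  | le C τ => f (le C τ)
  | ge C τ => f (ge C τ)
  | and φ ψ => φ.evalAtoms f ∧ ψ.evalAtoms f
  | or φ ψ => φ.evalAtoms f ∨ ψ.evalAtoms f
  | not φ => ¬ φ.evalAtoms f

variable {cv cv' : Clock A → ℝ → Prop}

theorem eval_congr {φ : ClockConstraint A} (h : ∀ C ∈ φ.clocks, ∀ v, cv C v ↔ cv' C v) :
    φ.eval cv ↔ φ.eval cv' := by
  induction φ with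
  | tt => rfl
  | le C τ | ge C τ => simp only [eval, h C rfl]
  | and φ ψ ihφ ihψ | or φ ψ ihφ ihψ =>
    simp only [eval, ihφ fun C hC => h C (.inl hC), ihψ fun C hC => h C (.inr hC)]
  | not φ ih => simp only [eval, ih h]

theorem evalAtoms_iff_eval {f : ClockConstraint A → Prop} {φ : ClockConstraint A}
    (h : ∀ ψ ∈ φ.atoms, f ψ ↔ ψ.eval cv) : φ.evalAtoms f ↔ φ.eval cv := by
  induction φ with
  | tt => rfl
  | le C τ | ge C τ => exact h _ rfl
  | and φ ψ ihφ ihψ | or φ ψ ihφ ihψ =>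
    simp only [evalAtoms, eval, ihφ fun C hC => h C (.inl hC), ihψ fun C hC => h C (.inr hC)]
  | not φ ih => simp only [evalAtoms, eval, ih h]

theorem clocks_subsingleton_of_mem_atoms {φ ψ : ClockConstraint A} (h : ψ ∈ φ.atoms) :
    ψ.clocks.Subsingleton := by
  induction φ with
  | tt => exact absurd h id
  | le C τ | ge C τ => rw [Set.mem_singleton_iff.mp h]; exact Set.subsingleton_singleton
  | and φ ψ ihφ ihψ | or φ ψ ihφ ihψ => exact h.elim ihφ ihψ
  | not φ ih => exact ih h

end ClockConstraint

section Clocks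

variable {lab : A → SymbolKind} {w : List (A × ℝ)} {i : ℕ}

theorem sat_iff_eval {φ : ClockConstraint A} : Sat lab w i φ ↔ φ.eval (ClockVal lab w i) := by
  induction φ <;> simp [Sat, ClockConstraint.eval, *]

namespace ClockVal

variable {C : Clock A} {v v' : ℝ}

theorem unique (h : ClockVal lab w i C v) (h' : ClockVal lab w i C v') : v = v' := by
  cases C with
  | histS a =>
    obtain ⟨pi, pj, j, hpi, hj, hpj, rfl, hlast, rfl⟩ := h
    obtain ⟨pi', pj', j', hpi', hj', hpj', ha', hlast', rfl⟩ := h'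
    obtain rfl : j = j' := by
      by_contra hne
      rcases Nat.lt_or_gt_of_ne hne with hlt | hlt
      exacts [hlast j' pj' hlt hj' hpj' ha', hlast' j pj hlt hj hpj rfl]
    obtain rfl := Option.some.inj (hpi.symm.trans hpi')
    obtain rfl := Option.some.inj (hpj.symm.trans hpj')
    rfl
  | predS a =>
    obtain ⟨pi, pj, j, hpi, hj, hpj, rfl, hfirst, rfl⟩ := h
    obtain ⟨pi', pj', j', hpi', hj', hpj', ha', hfirst', rfl⟩ := h'
    obtain rfl : j = j' := by
      by_contra hne
      rcases Nat.lt_or_gt_of_ne hne with hlt | hlt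
      exacts [hfirst' j pj hj hlt hpj rfl, hfirst j' pj' hj' hlt hpj' ha']
    obtain rfl := Option.some.inj (hpi.symm.trans hpi')
    obtain rfl := Option.some.inj (hpj.symm.trans hpj')
    rfl
  | histStack =>
    obtain ⟨pi, pj, j, hm, hpi, hpj, rfl⟩ := h
    obtain ⟨pi', pj', j', hm', hpi', hpj', rfl⟩ := h'
    obtain rfl := hm.left_unique hm'
    obtain rfl := Option.some.inj (hpi.symm.trans hpi')
    obtain rfl := Option.some.inj (hpj.symm.trans hpj')
    rfl
  | predStack =>
    obtain ⟨pi, pj, j, hm, hpi, hpj, rfl⟩ := h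
    obtain ⟨pi', pj', j', hm', hpi', hpj', rfl⟩ := h'
    obtain rfl := hm.right_unique hm'
    obtain rfl := Option.some.inj (hpi.symm.trans hpi')
    obtain rfl := Option.some.inj (hpj.symm.trans hpj')
    rfl

theorem nonneg (ht : IsTimed w) (h : ClockVal lab w i C v) : 0 ≤ v := by
  cases C with
  | histS a =>
    obtain ⟨pi, pj, j, hpi, hj, hpj, -, -, rfl⟩ := h
    linarith [ht.lt hj hpj hpi]
  | predS a =>
    obtain ⟨pi, pj, j, hpi, hj, hpj, -, -, rfl⟩ := h
    linarith [ht.lt hj hpi hpj]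
  | histStack =>
    obtain ⟨pi, pj, j, hm, hpi, hpj, rfl⟩ := h
    linarith [ht.lt hm.1 hpj hpi]
  | predStack =>
    obtain ⟨pi, pj, j, hm, hpi, hpj, rfl⟩ := h
    linarith [ht.lt hm.1 hpi hpj]

end ClockVal

variable (lab w) in
/-- Clock values at position `i` when only the returns before position `n` are known. -/
def clockValUpTo (n i : ℕ) : Clock A → ℝ → Prop
  | .predStack => ClockVal lab (w.take n) i .predStack
  | C => ClockVal lab w i C

variable (lab w) in
def SatUpTo (n i : ℕ) (φ : ClockConstraint A) : Prop := φ.eval (clockValUpTo lab w n i)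

variable {n : ℕ} {C : Clock A} {v : ℝ} {φ : ClockConstraint A}

theorem clockValUpTo_of_ne (hC : C ≠ .predStack) :
    clockValUpTo lab w n i C = ClockVal lab w i C := by
  cases C <;> first | rfl | exact absurd rfl hC

theorem clockValUpTo_predStack_iff :
    clockValUpTo lab w n i .predStack v ↔
      ∃ j p r, Matches lab w i j ∧ j < n ∧ w[i]? = some p ∧ w[j]? = some r ∧
        v = r.2 - p.2 := by
  constructor
  · rintro ⟨p, r, j, hm, hp, hr, rfl⟩
    obtain ⟨hm, hjn⟩ := Matches.take_iff.mp hm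
    rw [List.getElem?_take_of_lt (hm.1.trans hjn)] at hp
    rw [List.getElem?_take_of_lt hjn] at hr
    exact ⟨j, p, r, hm, hjn, hp, hr, rfl⟩
  · rintro ⟨j, p, r, hm, hjn, hp, hr, rfl⟩
    rw [← List.getElem?_take_of_lt (hm.1.trans hjn)] at hp
    rw [← List.getElem?_take_of_lt hjn] at hr
    exact ⟨p, r, j, Matches.take_iff.mpr ⟨hm, hjn⟩, hp, hr, rfl⟩

theorem satUpTo_iff_sat (h : Clock.predStack ∉ φ.clocks) :
    SatUpTo lab w n i φ ↔ Sat lab w i φ := by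
  rw [SatUpTo, sat_iff_eval]
  exact ClockConstraint.eval_congr fun C hC v => by
    rw [clockValUpTo_of_ne fun he => h (he ▸ hC)]

theorem satUpTo_length : SatUpTo lab w w.length i φ ↔ Sat lab w i φ := by
  rw [SatUpTo, sat_iff_eval]
  exact ClockConstraint.eval_congr fun C _ v => by
    cases C <;> simp [clockValUpTo]

theorem satUpTo_congr {n' : ℕ} (h : ∀ r, Matches lab w i r → (r < n ↔ r < n')) :
    SatUpTo lab w n i φ ↔ SatUpTo lab w n' i φ := by
  refine ClockConstraint.eval_congr fun C _ v => ?_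
  cases C with
  | predStack =>
    simp only [clockValUpTo_predStack_iff]
    exact exists_congr fun j => exists₂_congr fun p r =>
      ⟨fun ⟨hm, hj, hrest⟩ => ⟨hm, (h j hm).mp hj, hrest⟩,
        fun ⟨hm, hj, hrest⟩ => ⟨hm, (h j hm).mpr hj, hrest⟩⟩
  | _ => rfl

theorem not_clockValUpTo_succ_self : ¬ clockValUpTo lab w (i + 1) i .predStack v := by
  rw [clockValUpTo_predStack_iff]
  rintro ⟨j, -, -, hm, hj, -⟩
  exact absurd hm.1 (by omega)

theorem clockVal_histStack_iff {c : ℕ} (h : Matches lab w c i) :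
    ClockVal lab w i .histStack v ↔ clockValUpTo lab w (i + 1) c .predStack v := by
  rw [clockValUpTo_predStack_iff]
  constructor
  · rintro ⟨pi, pc, j, hm, hpi, hpc, rfl⟩
    obtain rfl := h.left_unique hm
    exact ⟨i, pc, pi, h, i.lt_succ_self, hpc, hpi, rfl⟩
  · rintro ⟨j, pc, pi, hm, -, hpc, hpi, rfl⟩
    obtain rfl := h.right_unique hm
    exact ⟨pi, pc, c, h, hpi, hpc, rfl⟩

end Clocks

section Snapshots

abbrev Snapshot (A : Type) := {σ : Clock A → Option ℝ // σ .predStack = none}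

def SnapSat (σ : Snapshot A) (φ : ClockConstraint A) : Prop := φ.eval fun C v => σ.1 C = some v

open Classical in
noncomputable def snapshot (lab : A → SymbolKind) (w : List (A × ℝ)) (i : ℕ) : Snapshot A :=
  ⟨fun C =>
    if h : C ≠ .predStack ∧ ∃ v, ClockVal lab w i C v then some h.2.choose else none, by simp⟩

/-- On timed words clock values are nonnegative, so `¬ (C ≥ 0)` says that `C` is undefined. -/
def pin (C : Clock A) : Option ℝ → ClockConstraint A
  | some v => .and (.le C v) (.ge C v)
  | none => .not (.ge C 0)

def pinAll (σ : Clock A → Option ℝ) (L : List (Clock A)) : ClockConstraint A :=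
  L.foldr (fun C φ => .and (pin C (σ C)) φ) .tt

noncomputable def observableClocks (A : Type) [Finite A] : List (Clock A) :=
  letI := Fintype.ofFinite A
  .histStack :: ((Finset.univ : Finset A).toList.map .histS ++ Finset.univ.toList.map .predS)

noncomputable def snapshotGuard [Finite A] (σ : Snapshot A) : ClockConstraint A :=
  pinAll σ.1 (observableClocks A)

variable {lab : A → SymbolKind} {w : List (A × ℝ)} {i : ℕ} {C : Clock A} {v : ℝ}

theorem snapshot_eq_some_iff :
    (snapshot lab w i).1 C = some v ↔ C ≠ .predStack ∧ ClockVal lab w i C v := by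
  simp only [snapshot]
  split_ifs with h
  · exact ⟨fun he => ⟨h.1, Option.some.inj he ▸ h.2.choose_spec⟩,
      fun hv => congrArg some (h.2.choose_spec.unique hv.2)⟩
  · exact ⟨nofun, fun hv => h ⟨hv.1, v, hv.2⟩⟩

theorem snapSat_snapshot_iff {φ : ClockConstraint A} :
    SnapSat (snapshot lab w i) φ ↔ SatUpTo lab w (i + 1) i φ := by
  refine ClockConstraint.eval_congr fun C _ v => ?_
  rw [snapshot_eq_some_iff]
  by_cases hC : C = .predStack
  · subst hC
    exact ⟨fun h => absurd rfl h.1, fun h => absurd h not_clockValUpTo_succ_self⟩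
  · rw [clockValUpTo_of_ne hC]
    exact and_iff_right hC

theorem sat_pin_iff (ht : IsTimed w) (hC : C ≠ .predStack) {o : Option ℝ} :
    Sat lab w i (pin C o) ↔ (snapshot lab w i).1 C = o := by
  cases o with
  | some v =>
    rw [snapshot_eq_some_iff, and_iff_right hC]
    refine ⟨fun ⟨⟨v₁, h₁, hle⟩, ⟨v₂, h₂, hge⟩⟩ => ?_,
      fun h => ⟨⟨v, h, le_rfl⟩, ⟨v, h, le_rfl⟩⟩⟩
    obtain rfl := h₁.unique h₂
    exact le_antisymm hle hge ▸ h₁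
  | none =>
    rw [← Option.not_isSome_iff_eq_none, Option.isSome_iff_exists]
    simp only [pin, Sat, snapshot_eq_some_iff, ne_eq, hC, not_false_eq_true, true_and, not_exists,
      not_and]
    exact forall_congr' fun v => ⟨fun h hv => h hv (hv.nonneg ht), fun h hv _ => h hv⟩

theorem sat_pinAll_iff (ht : IsTimed w) {σ : Clock A → Option ℝ} {L : List (Clock A)}
    (hL : ∀ C ∈ L, C ≠ .predStack) :
    Sat lab w i (pinAll σ L) ↔ ∀ C ∈ L, (snapshot lab w i).1 C = σ C := by
  induction L with
  | nil => simp [pinAll, Sat]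
  | cons C L ih =>
    simp only [pinAll, List.foldr_cons, List.forall_mem_cons] at ih ⊢
    rw [← ih fun C hC => hL C (.tail _ hC), ← sat_pin_iff ht (hL C (.head _))]
    rfl

theorem eq_of_pinAll_eq {σ σ' : Clock A → Option ℝ} {L : List (Clock A)}
    (h : pinAll σ L = pinAll σ' L) : ∀ C ∈ L, σ C = σ' C := by
  induction L with
  | nil => simp
  | cons C L ih =>
    simp only [pinAll, List.foldr_cons, ClockConstraint.and.injEq] at h
    refine List.forall_mem_cons.mpr ⟨?_, ih h.2⟩
    cases hσ : σ C <;> cases hσ' : σ' C <;> simp_all [pin]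

theorem mem_of_mem_clocks_pinAll {σ : Clock A → Option ℝ} {L : List (Clock A)}
    (h : C ∈ (pinAll σ L).clocks) : C ∈ L := by
  induction L with
  | nil => exact absurd h id
  | cons D L ih =>
    rcases h with h | h
    · cases hσ : σ D <;> simp_all [pin, ClockConstraint.clocks]
    · exact .tail _ (ih h)

theorem mem_observableClocks [Finite A] : C ∈ observableClocks A ↔ C ≠ .predStack := by
  cases C <;> simp [observableClocks]

variable [Finite A]

theorem sat_snapshotGuard_iff (ht : IsTimed w) {σ : Snapshot A} :
    Sat lab w i (snapshotGuard σ) ↔ σ = snapshot lab w i := by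
  rw [snapshotGuard, sat_pinAll_iff ht fun C => mem_observableClocks.mp]
  refine ⟨fun h => Subtype.ext (funext fun C => ?_), fun h C _ => by rw [h]⟩
  by_cases hC : C = .predStack
  · rw [hC, σ.2, (snapshot lab w i).2]
  · exact (h C (mem_observableClocks.mpr hC)).symm

theorem snapshotGuard_injective : Function.Injective (snapshotGuard (A := A)) := by
  refine fun σ σ' h => Subtype.ext (funext fun C => ?_)
  by_cases hC : C = .predStack
  · rw [hC, σ.2, σ'.2]
  · exact eq_of_pinAll_eq h C (mem_observableClocks.mpr hC)

theorem predStack_not_mem_clocks_snapshotGuard (σ : Snapshot A) :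
    Clock.predStack ∉ (snapshotGuard σ).clocks :=
  fun h => mem_observableClocks.mp (mem_of_mem_clocks_pinAll h) rfl

end Snapshots

/-- Its transitions read the exact values of all clocks but `▷s`. As an `ECIDPDA` its guards
pin these values, so two distinct guards are never satisfied together. -/
structure SnapshotAutomaton (lab : A → SymbolKind) (S G : Type) where
  init : S
  final : Set S
  int : A → Snapshot A → S → S
  call : (a : A) → lab a = .call → Snapshot A → S → S × G
  ret : A → Option G → Snapshot A → S → S

namespace SnapshotAutomaton

variable {lab : A → SymbolKind} {S G : Type} (T : SnapshotAutomaton lab S G)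

noncomputable def toECIDPDA [Finite A] : ECIDPDA A S G where
  init := {T.init}
  final := T.final
  δint a s φ := {s' | ∃ σ, φ = snapshotGuard σ ∧ s' = T.int a σ s}
  δcall a s φ := {x | ∃ (h : lab a = .call) (σ : Snapshot A), φ = snapshotGuard σ ∧
    x = T.call a h σ s}
  δret a g s φ := {s' | ∃ σ, φ = snapshotGuard σ ∧ s' = T.ret a g σ s}

def next (σ : Snapshot A) (a : A) (c : S × List G) : S × List G :=
  if h : lab a = .call then ((T.call a h σ c.1).1, (T.call a h σ c.1).2 :: c.2)
  else if lab a = .ret then (T.ret a c.2.head? σ c.1, c.2.tail)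
  else (T.int a σ c.1, c.2)

noncomputable def configAt (w : List (A × ℝ)) : ℕ → S × List G
  | 0 => (T.init, [])
  | i + 1 =>
    match w[i]? with
    | some p => T.next (snapshot lab w i) p.1 (configAt w i)
    | none => configAt w i

variable [Finite A]

theorem exists_eq_snapshotGuard {φ : ClockConstraint A} (h : φ ∈ T.toECIDPDA.used) :
    ∃ σ, φ = snapshotGuard σ := by
  rcases h with ⟨a, q, x, σ, hφ, -⟩ | ⟨a, q, x, -, σ, hφ, -⟩ | ⟨a, g, q, x, σ, hφ, -⟩ <;>
    exact ⟨σ, hφ⟩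

theorem predStack_not_mem_clocks {φ : ClockConstraint A} (h : φ ∈ T.toECIDPDA.used) :
    Clock.predStack ∉ φ.clocks := by
  obtain ⟨σ, rfl⟩ := T.exists_eq_snapshotGuard h
  exact predStack_not_mem_clocks_snapshotGuard σ

theorem deterministic : T.toECIDPDA.Deterministic lab := by
  have excl : ∀ φ φ', φ ∈ T.toECIDPDA.used → φ' ∈ T.toECIDPDA.used → φ ≠ φ' →
      ∀ (w : List (A × ℝ)) (i : ℕ), IsTimed w → i < w.length →
        ¬ (Sat lab w i φ ∧ Sat lab w i φ') := by
    rintro φ φ' h h' hne w i ht - ⟨hs, hs'⟩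
    obtain ⟨σ, rfl⟩ := T.exists_eq_snapshotGuard h
    obtain ⟨σ', rfl⟩ := T.exists_eq_snapshotGuard h'
    rw [(sat_snapshotGuard_iff ht).mp hs, (sat_snapshotGuard_iff ht).mp hs'] at hne
    exact hne rfl
  refine ⟨⟨T.init, rfl⟩, ?_, ?_, ?_,
    fun a q φ φ' hne h h' => excl φ φ' (.inl ⟨a, q, h⟩) (.inl ⟨a, q, h'⟩) hne,
    fun a q φ φ' hne h h' => excl φ φ' (.inr (.inl ⟨a, q, h⟩)) (.inr (.inl ⟨a, q, h'⟩)) hne,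
    fun a g q φ φ' hne h h' =>
      excl φ φ' (.inr (.inr ⟨a, g, q, h⟩)) (.inr (.inr ⟨a, g, q, h'⟩)) hne⟩
  · rintro a q φ _ ⟨σ, rfl, rfl⟩ _ ⟨σ', hσ, rfl⟩
    rw [snapshotGuard_injective hσ]
  · rintro a q φ _ ⟨h, σ, rfl, rfl⟩ _ ⟨-, σ', hσ, rfl⟩
    rw [snapshotGuard_injective hσ]
  · rintro a g q φ _ ⟨σ, rfl, rfl⟩ _ ⟨σ', hσ, rfl⟩
    rw [snapshotGuard_injective hσ]

theorem reach_succ_next {w : List (A × ℝ)} (ht : IsTimed w) {i : ℕ} {p : A × ℝ}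
    (hp : w[i]? = some p) {c : S × List G} (h : Reach lab T.toECIDPDA w i c) :
    Reach lab T.toECIDPDA w (i + 1) (T.next (snapshot lab w i) p.1 c) := by
  obtain ⟨q, γ⟩ := c
  have hs := (sat_snapshotGuard_iff ht (σ := snapshot lab w i)).mpr rfl
  rcases hl : lab p.1
  · simp only [next, hl, dite_true]
    exact .call h hp hl hs ⟨hl, _, rfl, rfl⟩
  · cases γ with
    | nil => simpa [next, hl] using .retEmpty h hp hl hs ⟨_, rfl, rfl⟩
    | cons s γ => simpa [next, hl] using .ret h hp hl hs ⟨_, rfl, rfl⟩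
  · simpa [next, hl] using .int h hp hl hs ⟨_, rfl, rfl⟩

theorem exists_eq_next_of_reach_succ {w : List (A × ℝ)} (ht : IsTimed w) {i : ℕ} {p : A × ℝ}
    (hp : w[i]? = some p) {c : S × List G} (h : Reach lab T.toECIDPDA w (i + 1) c) :
    ∃ c₀, Reach lab T.toECIDPDA w i c₀ ∧ c = T.next (snapshot lab w i) p.1 c₀ := by
  have hsnap : ∀ {σ}, Sat lab w i (snapshotGuard σ) → σ = snapshot lab w i :=
    (sat_snapshotGuard_iff ht).mp
  cases h with
  | int h hp' hl hs hδ =>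
    obtain ⟨σ, rfl, rfl⟩ := hδ
    obtain rfl := Option.some.inj (hp'.symm.trans hp)
    exact ⟨_, h, by simp [next, hl, hsnap hs]⟩
  | call h hp' hl hs hδ =>
    obtain ⟨_, σ, rfl, hx⟩ := hδ
    obtain rfl := Option.some.inj (hp'.symm.trans hp)
    refine ⟨_, h, ?_⟩
    rw [← hsnap hs]
    simpa [next, hl] using Prod.ext_iff.mp hx
  | ret h hp' hl hs hδ =>
    obtain ⟨σ, rfl, rfl⟩ := hδ
    obtain rfl := Option.some.inj (hp'.symm.trans hp)
    exact ⟨_, h, by simp [next, hl, hsnap hs]⟩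
  | retEmpty h hp' hl hs hδ =>
    obtain ⟨σ, rfl, rfl⟩ := hδ
    obtain rfl := Option.some.inj (hp'.symm.trans hp)
    exact ⟨_, h, by simp [next, hl, hsnap hs]⟩

theorem reach_iff {w : List (A × ℝ)} (ht : IsTimed w) {i : ℕ} (hi : i ≤ w.length)
    {c : S × List G} : Reach lab T.toECIDPDA w i c ↔ c = T.configAt w i := by
  induction i generalizing c with
  | zero =>
    refine ⟨fun h => ?_, fun h => h ▸ .start rfl⟩
    cases h with
    | start hq => rw [Set.mem_singleton_iff.mp hq]; rfl
  | succ i ih =>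
    have hp : w[i]? = some w[i] := List.getElem?_eq_getElem hi
    simp only [configAt, hp]
    refine ⟨fun h => ?_, fun h => h ▸ T.reach_succ_next ht hp ((ih (by omega)).mpr rfl)⟩
    obtain ⟨c₀, h₀, rfl⟩ := T.exists_eq_next_of_reach_succ ht hp h
    rw [(ih (by omega)).mp h₀]

theorem accepts_iff {w : List (A × ℝ)} (ht : IsTimed w) :
    T.toECIDPDA.Accepts lab w ↔ (T.configAt w w.length).1 ∈ T.final := by
  simp only [ECIDPDA.Accepts, T.reach_iff ht le_rfl]
  exact ⟨fun ⟨_, _, hc, hq⟩ => hc ▸ hq, fun h => ⟨_, _, rfl, h⟩⟩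

end SnapshotAutomaton

namespace ECIDPDA

inductive Step (lab : A → SymbolKind) (M : ECIDPDA A Q Γ) (sat : ClockConstraint A → Prop)
    (a : A) : Q × List Γ → Q × List Γ → Prop
  | int {q q' : Q} {γ : List Γ} {φ : ClockConstraint A} :
      lab a = .int → sat φ → q' ∈ M.δint a q φ → Step lab M sat a (q, γ) (q', γ)
  | call {q q' : Q} {γ : List Γ} {s : Γ} {φ : ClockConstraint A} :
      lab a = .call → sat φ → (q', s) ∈ M.δcall a q φ →
      Step lab M sat a (q, γ) (q', s :: γ)
  | ret {q q' : Q} {γ : List Γ} {s : Γ} {φ : ClockConstraint A} :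
      lab a = .ret → sat φ → q' ∈ M.δret a (some s) q φ →
      Step lab M sat a (q, s :: γ) (q', γ)
  | retEmpty {q q' : Q} {φ : ClockConstraint A} :
      lab a = .ret → sat φ → q' ∈ M.δret a none q φ → Step lab M sat a (q, []) (q', [])

inductive RunUpTo (lab : A → SymbolKind) (M : ECIDPDA A Q Γ) (w : List (A × ℝ)) (n x : ℕ)
    (c₀ : Q × List Γ) : ℕ → Q × List Γ → Prop
  | refl : RunUpTo lab M w n x c₀ x c₀
  | step {i : ℕ} {c c' : Q × List Γ} {p : A × ℝ} :
      RunUpTo lab M w n x c₀ i c → w[i]? = some p →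
      Step lab M (SatUpTo lab w n i) p.1 c c' → RunUpTo lab M w n x c₀ (i + 1) c'

variable {lab : A → SymbolKind} {M : ECIDPDA A Q Γ}

namespace Step

variable {sat sat' : ClockConstraint A → Prop} {a : A}

theorem mono (hsat : ∀ φ, sat φ → sat' φ) {c c' : Q × List Γ} (h : Step lab M sat a c c') :
    Step lab M sat' a c c' := by
  cases h with
  | int hl hs hd => exact .int hl (hsat _ hs) hd
  | call hl hs hd => exact .call hl (hsat _ hs) hd
  | ret hl hs hd => exact .ret hl (hsat _ hs) hd
  | retEmpty hl hs hd => exact .retEmpty hl (hsat _ hs) hd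

theorem congr (hsat : ∀ φ, sat φ ↔ sat' φ) {c c' : Q × List Γ} :
    Step lab M sat a c c' ↔ Step lab M sat' a c c' :=
  ⟨mono fun φ => (hsat φ).mp, mono fun φ => (hsat φ).mpr⟩

variable {q q' : Q} {γ γ' : List Γ}

theorem iff_of_int (hl : lab a = .int) :
    Step lab M sat a (q, γ) (q', γ') ↔
      γ' = γ ∧ ∃ φ, sat φ ∧ q' ∈ M.δint a q φ := by
  refine ⟨fun h => ?_, fun ⟨hγ, φ, hs, hd⟩ => hγ ▸ .int hl hs hd⟩
  cases h with
  | int _ hs hd => exact ⟨rfl, _, hs, hd⟩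
  | _ => simp_all

theorem iff_of_call (hl : lab a = .call) :
    Step lab M sat a (q, γ) (q', γ') ↔
      ∃ s, γ' = s :: γ ∧ ∃ φ, sat φ ∧ (q', s) ∈ M.δcall a q φ := by
  refine ⟨fun h => ?_, fun ⟨s, hγ, φ, hs, hd⟩ => hγ ▸ .call hl hs hd⟩
  cases h with
  | call _ hs hd => exact ⟨_, rfl, _, hs, hd⟩
  | _ => simp_all

theorem nil_iff_of_ret (hl : lab a = .ret) :
    Step lab M sat a (q, []) (q', γ') ↔
      γ' = [] ∧ ∃ φ, sat φ ∧ q' ∈ M.δret a none q φ := by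
  refine ⟨fun h => ?_, fun ⟨hγ, φ, hs, hd⟩ => hγ ▸ .retEmpty hl hs hd⟩
  cases h with
  | retEmpty _ hs hd => exact ⟨rfl, _, hs, hd⟩
  | _ => simp_all

theorem cons_iff_of_ret (hl : lab a = .ret) {s : Γ} :
    Step lab M sat a (q, s :: γ) (q', γ') ↔
      γ' = γ ∧ ∃ φ, sat φ ∧ q' ∈ M.δret a (some s) q φ := by
  refine ⟨fun h => ?_, fun ⟨hγ, φ, hs, hd⟩ => hγ ▸ .ret hl hs hd⟩
  cases h with
  | ret _ hs hd => exact ⟨rfl, _, hs, hd⟩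
  | _ => simp_all

theorem length_eq {c c' : Q × List Γ} (h : Step lab M sat a c c') {L : List ℕ}
    (hL : c.2.length = L.length) (m : ℕ) :
    c'.2.length = (stackUpdate m (some (lab a)) L).length := by
  cases h with
  | int hl => simpa [hl, stackUpdate] using hL
  | call hl => simpa [hl, stackUpdate] using hL
  | ret hl => simp only [List.length_cons, stackUpdate, hl, List.length_tail] at hL ⊢; omega
  | retEmpty hl => simp only [List.length_nil, stackUpdate, hl, List.length_tail] at hL ⊢; omega

theorem append {q : Q} {γ : List Γ} {c' : Q × List Γ} (h : Step lab M sat a (q, γ) c')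
    (hγ : lab a = .ret → γ ≠ []) (δ : List Γ) :
    Step lab M sat a (q, γ ++ δ) (c'.1, c'.2 ++ δ) := by
  cases h with
  | int hl hs hd => exact .int hl hs hd
  | call hl hs hd => exact .call hl hs hd
  | ret hl hs hd => exact .ret hl hs hd
  | retEmpty hl => exact absurd rfl (hγ hl)

theorem exists_of_append {q : Q} {γ δ : List Γ} {c' : Q × List Γ}
    (h : Step lab M sat a (q, γ ++ δ) c') (hγ : lab a = .ret → γ ≠ []) :
    ∃ γ', c'.2 = γ' ++ δ ∧ Step lab M sat a (q, γ) (c'.1, γ') := by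
  generalize hγδ : γ ++ δ = γδ at h
  cases h with
  | int hl hs hd => exact ⟨γ, hγδ.symm, .int hl hs hd⟩
  | call hl hs hd => exact ⟨_ :: γ, by simp [hγδ], .call hl hs hd⟩
  | ret hl hs hd =>
    obtain ⟨s, γ', rfl⟩ := List.exists_cons_of_ne_nil (hγ hl)
    simp only [List.cons_append, List.cons.injEq] at hγδ
    obtain ⟨rfl, rfl⟩ := hγδ
    exact ⟨γ', rfl, .ret hl hs hd⟩
  | retEmpty hl => exact absurd (List.append_eq_nil_iff.mp hγδ).1 (hγ hl)

end Step

namespace RunUpTo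

variable {w : List (A × ℝ)} {n x : ℕ} {c₀ : Q × List Γ}

theorem le {b : ℕ} {c : Q × List Γ} (h : RunUpTo lab M w n x c₀ b c) : x ≤ b := by
  induction h with
  | refl => rfl
  | step _ _ _ ih => omega

theorem trans {b d : ℕ} {c₁ c₂ : Q × List Γ} (h₁ : RunUpTo lab M w n x c₀ b c₁)
    (h₂ : RunUpTo lab M w n b c₁ d c₂) : RunUpTo lab M w n x c₀ d c₂ := by
  induction h₂ with
  | refl => exact h₁
  | step _ hp hs ih => exact .step ih hp hs

theorem self_iff {c : Q × List Γ} : RunUpTo lab M w n x c₀ x c ↔ c = c₀ := by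
  refine ⟨fun h => ?_, fun h => h ▸ .refl⟩
  cases h with
  | refl => rfl
  | step h => exact absurd h.le (by omega)

theorem succ_iff {i : ℕ} {p : A × ℝ} (hxi : x ≤ i) (hp : w[i]? = some p) {c : Q × List Γ} :
    RunUpTo lab M w n x c₀ (i + 1) c ↔
      ∃ c', RunUpTo lab M w n x c₀ i c' ∧ Step lab M (SatUpTo lab w n i) p.1 c' c := by
  refine ⟨fun h => ?_, fun ⟨c', h, hs⟩ => .step h hp hs⟩
  cases h with
  | refl => omega
  | step h hp' hs => exact ⟨_, h, Option.some.inj (hp'.symm.trans hp) ▸ hs⟩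

theorem split {b j : ℕ} {c : Q × List Γ} (h : RunUpTo lab M w n x c₀ b c) (hxj : x ≤ j)
    (hjb : j ≤ b) :
    ∃ c₁, RunUpTo lab M w n x c₀ j c₁ ∧ RunUpTo lab M w n j c₁ b c := by
  induction h with
  | refl =>
    obtain rfl : j = x := le_antisymm hjb hxj
    exact ⟨c₀, .refl, .refl⟩
  | @step i c c' p h hp hs ih =>
    rcases hjb.eq_or_lt with rfl | hjb
    · exact ⟨c', .step h hp hs, .refl⟩
    · obtain ⟨c₁, h₁, h₂⟩ := ih (by omega)
      exact ⟨c₁, h₁, .step h₂ hp hs⟩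

theorem mono_horizon {n' b : ℕ} {c : Q × List Γ}
    (hsat : ∀ m, x ≤ m → m < b → ∀ φ, SatUpTo lab w n m φ → SatUpTo lab w n' m φ)
    (h : RunUpTo lab M w n x c₀ b c) : RunUpTo lab M w n' x c₀ b c := by
  induction h with
  | refl => exact .refl
  | step h hp hs ih =>
    exact .step (ih fun m h₁ h₂ => hsat m h₁ (by omega)) hp
      (hs.mono (hsat _ h.le (Nat.lt_succ_self _)))

theorem congr_horizon {n' b : ℕ} {c : Q × List Γ}
    (hsat : ∀ m, x ≤ m → m < b → ∀ φ, SatUpTo lab w n m φ ↔ SatUpTo lab w n' m φ) :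
    RunUpTo lab M w n x c₀ b c ↔ RunUpTo lab M w n' x c₀ b c :=
  ⟨mono_horizon fun m h₁ h₂ φ => (hsat m h₁ h₂ φ).mp,
    mono_horizon fun m h₁ h₂ φ => (hsat m h₁ h₂ φ).mpr⟩

theorem length_eq {q : Q} {b : ℕ} {c : Q × List Γ} (h : RunUpTo lab M w n x (q, []) b c) :
    c.2.length = (pendingCalls lab w x b).length := by
  induction h with
  | refl => rw [pendingCalls_of_le le_rfl]; rfl
  | step h hp hs ih =>
    rw [pendingCalls_succ h.le, kindAt_of_getElem? hp rfl]
    exact hs.length_eq ih _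

theorem append {q : Q} {b : ℕ} {c : Q × List Γ} (h : RunUpTo lab M w n x (q, []) b c)
    (hne : NoUnderflow lab w x b) (δ : List Γ) : RunUpTo lab M w n x (q, δ) b (c.1, c.2 ++ δ) := by
  induction h with
  | refl => exact .refl
  | @step i c c' p h hp hs ih =>
    refine .step (ih (hne.mono (Nat.le_succ i))) hp (hs.append (fun hl hnil => ?_) δ)
    refine hne i h.le (Nat.lt_succ_self i) (kindAt_of_getElem? hp hl) ?_
    rw [← List.length_eq_zero_iff, ← h.length_eq, hnil, List.length_nil]

theorem exists_of_append {q : Q} {δ : List Γ} {b : ℕ} {c : Q × List Γ}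
    (h : RunUpTo lab M w n x (q, δ) b c)
    (hne : NoUnderflow lab w x b) :
    ∃ τ, c.2 = τ ++ δ ∧ RunUpTo lab M w n x (q, []) b (c.1, τ) := by
  induction h with
  | refl => exact ⟨[], rfl, .refl⟩
  | @step i c c' p h hp hs ih =>
    obtain ⟨τ, hc, hτ⟩ := ih (hne.mono (Nat.le_succ i))
    have hs : Step lab M (SatUpTo lab w n i) p.1 (c.1, τ ++ δ) c' := by rw [← hc]; exact hs
    obtain ⟨γ', hc', hs'⟩ := hs.exists_of_append
      fun hl hnil => hne i h.le (Nat.lt_succ_self i) (kindAt_of_getElem? hp hl) (by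
        rw [← List.length_eq_zero_iff, ← hτ.length_eq, hnil, List.length_nil])
    exact ⟨γ', hc', .step hτ hp hs'⟩

end RunUpTo

theorem reach_iff_runUpTo {w : List (A × ℝ)} {i : ℕ} {c : Q × List Γ} :
    Reach lab M w i c ↔ ∃ q₀ ∈ M.init, RunUpTo lab M w w.length 0 (q₀, []) i c := by
  constructor
  · intro h
    induction h with
    | start hq => exact ⟨_, hq, .refl⟩
    | int _ hp hl hs hd ih =>
      obtain ⟨q₀, hq₀, h⟩ := ih
      exact ⟨q₀, hq₀, .step h hp (.int hl (satUpTo_length.mpr hs) hd)⟩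
    | call _ hp hl hs hd ih =>
      obtain ⟨q₀, hq₀, h⟩ := ih
      exact ⟨q₀, hq₀, .step h hp (.call hl (satUpTo_length.mpr hs) hd)⟩
    | ret _ hp hl hs hd ih =>
      obtain ⟨q₀, hq₀, h⟩ := ih
      exact ⟨q₀, hq₀, .step h hp (.ret hl (satUpTo_length.mpr hs) hd)⟩
    | retEmpty _ hp hl hs hd ih =>
      obtain ⟨q₀, hq₀, h⟩ := ih
      exact ⟨q₀, hq₀, .step h hp (.retEmpty hl (satUpTo_length.mpr hs) hd)⟩
  · rintro ⟨q₀, hq₀, h⟩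
    induction h with
    | refl => exact .start hq₀
    | step _ hp hs ih =>
      cases hs with
      | int hl hs hd => exact .int ih hp hl (satUpTo_length.mp hs) hd
      | call hl hs hd => exact .call ih hp hl (satUpTo_length.mp hs) hd
      | ret hl hs hd => exact .ret ih hp hl (satUpTo_length.mp hs) hd
      | retEmpty hl hs hd => exact .retEmpty ih hp hl (satUpTo_length.mp hs) hd

end ECIDPDA

namespace ECIDPDA

section Determinization

variable (M : ECIDPDA A Q Γ) (Ψ : Set (ClockConstraint A))

def intSucc (σ : Snapshot A) (a : A) (q : Q) : Set Q :=
  {q' | ∃ φ, SnapSat σ φ ∧ q' ∈ M.δint a q φ}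

def callSucc (σ : Snapshot A) (a : A) (q : Q) : Set Q :=
  {q' | ∃ φ s, SnapSat σ φ ∧ (q', s) ∈ M.δcall a q φ}

def unmatchedRetSucc (σ : Snapshot A) (a : A) (q : Q) : Set Q :=
  {q' | ∃ φ, SnapSat σ φ ∧ q' ∈ M.δret a none q φ}

open Classical in
/-- Truth of an atom of a call guard, decided at the matching return: the atoms in `Ψ` are
looked up in the truth values `P` recorded at the call, the others concern `▷s`, whose value at
the call is the value `d` of `◁s` at the return. -/
def deferredAtomTruth (P : Set Ψ) (d : Option ℝ) (ψ : ClockConstraint A) : Prop :=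
  if h : ψ ∈ Ψ then ⟨ψ, h⟩ ∈ P else ψ.eval fun C v => C = .predStack ∧ d = some v

def matchedRetSucc (σ : Snapshot A) (a b : A) (P : Set Ψ) (R : Set (Q × Q)) (q : Q) : Set Q :=
  {q' | ∃ φc q₁ s q₂ φr, φc.evalAtoms (deferredAtomTruth Ψ P (σ.1 .histStack)) ∧
    (q₁, s) ∈ M.δcall b q φc ∧ (q₁, q₂) ∈ R ∧ SnapSat σ φr ∧
    q' ∈ M.δret a (some s) q₂ φr}

def advance (f : Q → Set Q) (RS : Set (Q × Q) × Set Q) : Set (Q × Q) × Set Q :=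
  ({pq | ∃ q, (pq.1, q) ∈ RS.1 ∧ pq.2 ∈ f q}, {q' | ∃ q ∈ RS.2, q' ∈ f q})

/-- A state `(R, S)` holds the summary `R` of the current well-nested stretch and the set `S`
of reachable states. A call pushes `(R, S)` together with the call symbol and the truth values of
the atoms in `Ψ`; its guard is evaluated only at the matching return. -/
noncomputable def determinization (lab : A → SymbolKind) :
    SnapshotAutomaton lab (Set (Q × Q) × Set Q)
      (Set (Q × Q) × Set Q × {a : A // lab a = .call} × Set Ψ) where
  init := (Set.diagonal Q, M.init)
  final := {RS | ∃ q ∈ RS.2, q ∈ M.final}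
  int a σ := advance (M.intSucc σ a)
  call a h σ RS := ((Set.diagonal Q, (advance (M.callSucc σ a) RS).2),
    (RS.1, RS.2, ⟨a, h⟩, {ψ | SnapSat σ ψ.1}))
  ret a e σ RS :=
    match e with
    | none => advance (M.unmatchedRetSucc σ a) RS
    | some (R, S, b, P) => advance (M.matchedRetSucc Ψ σ a b.1 P RS.1) (R, S)

variable (lab : A → SymbolKind) (w : List (A × ℝ))

/-- The states reachable after reading `i` symbols when `▷s` sees only the returns already
read: all that a deterministic automaton can know at `i`. -/
def reachSet (i : ℕ) : Set Q :=
  {q | ∃ q₀ ∈ M.init, ∃ γ, RunUpTo lab M w i 0 (q₀, []) i (q, γ)}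

def segStart (i : ℕ) : ℕ :=
  match pendingCalls lab w 0 i with
  | [] => 0
  | c :: _ => c + 1

def summary (i : ℕ) : Set (Q × Q) :=
  {pq | RunUpTo lab M w i (segStart lab w i) (pq.1, []) i (pq.2, [])}

def StackEntryAt (c : ℕ)
    (e : Set (Q × Q) × Set Q × {a : A // lab a = .call} × Set Ψ) : Prop :=
  ∃ p, w[c]? = some p ∧ ∃ h : lab p.1 = .call, e =
    (M.summary lab w c, M.reachSet lab w c, ⟨p.1, h⟩, {ψ | SnapSat (snapshot lab w c) ψ.1})

end Determinization

variable {M : ECIDPDA A Q Γ} {Ψ : Set (ClockConstraint A)} {lab : A → SymbolKind}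
  {w : List (A × ℝ)}

theorem segStart_le (i : ℕ) : segStart lab w i ≤ i := by
  unfold segStart
  split
  · exact Nat.zero_le _
  · next c _ h => exact (of_mem_pendingCalls (h ▸ List.mem_cons_self)).2.1

theorem runUpTo_succ_iff_of_unmatched {i x : ℕ} {p : A × ℝ} (hp : w[i]? = some p)
    (hnm : ∀ j, ¬ Matches lab w j i) (hxi : x ≤ i) {c₀ c : Q × List Γ} :
    RunUpTo lab M w (i + 1) x c₀ (i + 1) c ↔
      ∃ c', RunUpTo lab M w i x c₀ i c' ∧
        Step lab M (SnapSat (snapshot lab w i)) p.1 c' c := by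
  rw [RunUpTo.succ_iff hxi hp]
  refine exists_congr fun c' => and_congr ?_ (Step.congr fun φ => snapSat_snapshot_iff.symm)
  refine RunUpTo.congr_horizon fun m _ hm φ => satUpTo_congr fun r hr => ?_
  have : r ≠ i := fun h => hnm m (h ▸ hr)
  omega

theorem runUpTo_across_matched {n i c : ℕ} {ps : List ℕ} {p pc : A × ℝ}
    (hpend : pendingCalls lab w 0 i = c :: ps) (hp : w[i]? = some p) (hl : lab p.1 = .ret)
    (hpc : w[c]? = some pc) {q y : Q} {γ γ' : List Γ} :
    RunUpTo lab M w n c (q, γ) (i + 1) (y, γ') ↔ γ' = γ ∧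
      ∃ φc q₁ s q₂ φr, SatUpTo lab w n c φc ∧ (q₁, s) ∈ M.δcall pc.1 q φc ∧
        RunUpTo lab M w n (c + 1) (q₁, []) i (q₂, []) ∧ SatUpTo lab w n i φr ∧
        y ∈ M.δret p.1 (some s) q₂ φr := by
  have hc : c ∈ pendingCalls lab w 0 i := hpend ▸ List.mem_cons_self
  obtain ⟨-, hci, hkc⟩ := of_mem_pendingCalls hc
  have hcall : lab pc.1 = .call := Option.some.inj ((kindAt_of_getElem? hpc rfl).symm.trans hkc)
  have hne := noUnderflow_of_mem_pendingCalls hc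
  have hcall_step : ∀ {c₁}, RunUpTo lab M w n c (q, γ) (c + 1) c₁ ↔
      Step lab M (SatUpTo lab w n c) pc.1 (q, γ) c₁ := by
    intro c₁
    simp [RunUpTo.succ_iff le_rfl hpc, RunUpTo.self_iff]
  constructor
  · intro h
    obtain ⟨⟨q₂, γ₂⟩, h, hret⟩ := (RunUpTo.succ_iff hci.le hp).mp h
    obtain ⟨⟨q₁, γ₁⟩, h₁, h⟩ := h.split (Nat.le_succ c) hci
    obtain ⟨s, rfl, φc, hsc, hdc⟩ := (Step.iff_of_call hcall).mp (hcall_step.mp h₁)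
    obtain ⟨τ, rfl, hτ⟩ := h.exists_of_append hne
    obtain rfl : τ = [] := List.length_eq_zero_iff.mp
      (by rw [hτ.length_eq, (pendingCalls_eq_cons hpend).2]; rfl)
    obtain ⟨rfl, φr, hsr, hdr⟩ := (Step.cons_iff_of_ret hl).mp hret
    exact ⟨rfl, φc, q₁, s, q₂, φr, hsc, hdc, hτ, hsr, hdr⟩
  · rintro ⟨rfl, φc, q₁, s, q₂, φr, hsc, hdc, h, hsr, hdr⟩
    have h₁ := hcall_step.mpr (.call hcall hsc hdc)
    exact .step (h₁.trans (by simpa using h.append hne (s :: _))) hp (.ret hl hsr hdr)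

theorem satUpTo_iff_evalAtoms_deferredAtomTruth
    (hΨ : ∀ ψ ∈ M.atomicSet, ψ ∈ Ψ ↔ Clock.predStack ∉ ψ.clocks) {c i : ℕ}
    (hm : Matches lab w c i) {φ : ClockConstraint A} (hφ : φ ∈ M.used) :
    SatUpTo lab w (i + 1) c φ ↔ φ.evalAtoms (deferredAtomTruth Ψ
      {ψ | SnapSat (snapshot lab w c) ψ.1} ((snapshot lab w i).1 .histStack)) := by
  refine (ClockConstraint.evalAtoms_iff_eval fun ψ hψ => ?_).symm
  have hψM : ψ ∈ M.atomicSet := Set.mem_biUnion hφ hψ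
  unfold deferredAtomTruth
  split_ifs with hΨψ
  · have hnp := (hΨ ψ hψM).mp hΨψ
    change SnapSat _ ψ ↔ SatUpTo lab w (i + 1) c ψ
    rw [snapSat_snapshot_iff, satUpTo_iff_sat hnp, satUpTo_iff_sat hnp]
  · have hps : Clock.predStack ∈ ψ.clocks := not_not.mp (mt (hΨ ψ hψM).mpr hΨψ)
    refine ClockConstraint.eval_congr fun C hC v => ?_
    obtain rfl := ClockConstraint.clocks_subsingleton_of_mem_atoms hψ hC hps
    simp [← clockVal_histStack_iff hm, snapshot_eq_some_iff]

theorem runUpTo_succ_iff_of_matched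
    (hΨ : ∀ ψ ∈ M.atomicSet, ψ ∈ Ψ ↔ Clock.predStack ∉ ψ.clocks)
    {i c x : ℕ} {ps : List ℕ} {p pc : A × ℝ} (hi : i < w.length)
    (hpend : pendingCalls lab w 0 i = c :: ps)
    (hp : w[i]? = some p) (hl : lab p.1 = .ret) (hpc : w[c]? = some pc) (hxc : x ≤ c)
    {c₀ : Q × List Γ} {y : Q} {γ : List Γ} :
    RunUpTo lab M w (i + 1) x c₀ (i + 1) (y, γ) ↔
      ∃ q, RunUpTo lab M w c x c₀ c (q, γ) ∧
        y ∈ M.matchedRetSucc Ψ (snapshot lab w i) p.1 pc.1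
          {ψ | SnapSat (snapshot lab w c) ψ.1} (M.summary lab w i) q := by
  have hm := matches_of_pendingCalls_eq_cons hi (kindAt_of_getElem? hp hl) hpend
  have hc : c ∈ pendingCalls lab w 0 i := hpend ▸ List.mem_cons_self
  have hbefore : ∀ m, x ≤ m → m < c → ∀ φ,
      SatUpTo lab w (i + 1) m φ ↔ SatUpTo lab w c m φ := fun m _ hmc φ =>
    satUpTo_congr fun r hr => ⟨fun h => hr.lt_of_mem_pendingCalls hc hmc (by omega),
      fun h => by have := hm.1; omega⟩
  have hsummary : ∀ q₁ q₂, RunUpTo lab M w (i + 1) (c + 1) (q₁, []) i (q₂, []) ↔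
      (q₁, q₂) ∈ M.summary lab w i := fun q₁ q₂ => by
    simp only [summary, segStart, hpend]
    refine RunUpTo.congr_horizon fun m hm₁ _ φ => satUpTo_congr fun r hr => ?_
    have : r ≠ i := fun h => by have := hm.left_unique (h ▸ hr); omega
    omega
  have hcall : ∀ {q φc q₁ s}, (q₁, s) ∈ M.δcall pc.1 q φc →
      (SatUpTo lab w (i + 1) c φc ↔ φc.evalAtoms (deferredAtomTruth Ψ
        {ψ | SnapSat (snapshot lab w c) ψ.1} ((snapshot lab w i).1 .histStack))) := fun hdc =>
    satUpTo_iff_evalAtoms_deferredAtomTruth hΨ hm (.inr (.inl ⟨_, _, _, hdc⟩))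
  constructor
  · intro h
    obtain ⟨⟨q, γc⟩, h₁, h₂⟩ := h.split hxc (by have := hm.1; omega)
    obtain ⟨rfl, φc, q₁, s, q₂, φr, hsc, hdc, hin, hsr, hdr⟩ :=
      (runUpTo_across_matched hpend hp hl hpc).mp h₂
    exact ⟨q, (RunUpTo.congr_horizon hbefore).mp h₁, φc, q₁, s, q₂, φr, (hcall hdc).mp hsc,
      hdc, (hsummary q₁ q₂).mp hin, snapSat_snapshot_iff.mpr hsr, hdr⟩
  · rintro ⟨q, h₁, φc, q₁, s, q₂, φr, hsc, hdc, hin, hsr, hdr⟩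
    exact ((RunUpTo.congr_horizon hbefore).mpr h₁).trans
      ((runUpTo_across_matched hpend hp hl hpc).mpr ⟨rfl, φc, q₁, s, q₂, φr,
        (hcall hdc).mpr hsc, hdc, (hsummary q₁ q₂).mpr hin, snapSat_snapshot_iff.mp hsr, hdr⟩)

section Steps

variable {i : ℕ} {p : A × ℝ}

theorem summary_reachSet_succ_of_int (hp : w[i]? = some p) (hl : lab p.1 = .int) :
    (M.summary lab w (i + 1), M.reachSet lab w (i + 1)) =
      advance (M.intSucc (snapshot lab w i) p.1) (M.summary lab w i, M.reachSet lab w i) := by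
  have hk := kindAt_of_getElem? hp hl
  have hnm : ∀ j, ¬ Matches lab w j i := fun j hm => by simp [hm.kindAt_right] at hk
  have hseg : segStart lab w (i + 1) = segStart lab w i := by
    simp [segStart, pendingCalls_succ (Nat.zero_le i), hk, stackUpdate]
  refine Prod.ext (Set.ext fun pq => ?_) (Set.ext fun q' => ?_)
  · simp only [summary, advance, hseg, Set.mem_ofPred_eq]
    rw [runUpTo_succ_iff_of_unmatched hp hnm (segStart_le i)]
    simp [Step.iff_of_int hl, intSucc]
  · simp only [reachSet, advance, Set.mem_ofPred_eq]
    simp only [runUpTo_succ_iff_of_unmatched hp hnm (Nat.zero_le i), Step.iff_of_int hl,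
      Prod.exists, ↓existsAndEq, true_and, intSucc, Set.mem_ofPred_eq]
    aesop

theorem summary_reachSet_succ_of_call (hp : w[i]? = some p) (hl : lab p.1 = .call) :
    (M.summary lab w (i + 1), M.reachSet lab w (i + 1)) = (Set.diagonal Q,
      (advance (M.callSucc (snapshot lab w i) p.1) (M.summary lab w i, M.reachSet lab w i)).2) := by
  have hk := kindAt_of_getElem? hp hl
  have hnm : ∀ j, ¬ Matches lab w j i := fun j hm => by simp [hm.kindAt_right] at hk
  have hseg : segStart lab w (i + 1) = i + 1 := by
    simp [segStart, pendingCalls_succ (Nat.zero_le i), hk, stackUpdate]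
  refine Prod.ext (Set.ext fun pq => ?_) (Set.ext fun q' => ?_)
  · simp [summary, hseg, RunUpTo.self_iff, Set.diagonal, eq_comm]
  · simp only [reachSet, advance, Set.mem_ofPred_eq]
    simp only [runUpTo_succ_iff_of_unmatched hp hnm (Nat.zero_le i), Step.iff_of_call hl,
      Prod.exists, ↓existsAndEq, true_and, exists_and_left, exists_and_right, callSucc,
      Set.mem_ofPred_eq]
    aesop

theorem summary_reachSet_succ_of_unmatched (hp : w[i]? = some p) (hl : lab p.1 = .ret)
    (hnil : pendingCalls lab w 0 i = []) :
    (M.summary lab w (i + 1), M.reachSet lab w (i + 1)) =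
      advance (M.unmatchedRetSucc (snapshot lab w i) p.1)
        (M.summary lab w i, M.reachSet lab w i) := by
  have hk := kindAt_of_getElem? hp hl
  have hnm : ∀ j, ¬ Matches lab w j i := fun j hm => by
    simp [hm.pendingCalls_eq (Nat.zero_le j)] at hnil
  have hseg : segStart lab w (i + 1) = 0 ∧ segStart lab w i = 0 := by
    simp [segStart, pendingCalls_succ (Nat.zero_le i), hk, stackUpdate, hnil]
  have hstack : ∀ {x q₀ q γ}, RunUpTo lab M w i x (q₀, []) i (q, γ) → x = 0 → γ = [] :=
    fun h hx => List.length_eq_zero_iff.mp (by rw [h.length_eq, hx, hnil]; rfl)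
  refine Prod.ext (Set.ext fun pq => ?_) (Set.ext fun q' => ?_)
  · simp only [summary, advance, hseg, Set.mem_ofPred_eq]
    rw [runUpTo_succ_iff_of_unmatched hp hnm (Nat.zero_le i)]
    constructor
    · rintro ⟨⟨q, γ⟩, h, hs⟩
      obtain rfl := hstack h rfl
      exact ⟨q, h, ((Step.nil_iff_of_ret hl).mp hs).2⟩
    · rintro ⟨q, h, hs⟩
      exact ⟨_, h, (Step.nil_iff_of_ret hl).mpr ⟨rfl, hs⟩⟩
  · simp only [reachSet, advance, Set.mem_ofPred_eq]
    simp only [runUpTo_succ_iff_of_unmatched hp hnm (Nat.zero_le i)]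
    constructor
    · rintro ⟨q₀, h₀, γ', ⟨q, γ⟩, h, hs⟩
      obtain rfl := hstack h rfl
      exact ⟨q, ⟨q₀, h₀, [], h⟩, ((Step.nil_iff_of_ret hl).mp hs).2⟩
    · rintro ⟨q, ⟨q₀, h₀, γ, h⟩, hs⟩
      obtain rfl := hstack h rfl
      exact ⟨q₀, h₀, [], _, h, (Step.nil_iff_of_ret hl).mpr ⟨rfl, hs⟩⟩

theorem summary_reachSet_succ_of_matched
    (hΨ : ∀ ψ ∈ M.atomicSet, ψ ∈ Ψ ↔ Clock.predStack ∉ ψ.clocks)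
    {c : ℕ} {ps : List ℕ} {pc : A × ℝ} (hi : i < w.length)
    (hpend : pendingCalls lab w 0 i = c :: ps)
    (hp : w[i]? = some p) (hl : lab p.1 = .ret) (hpc : w[c]? = some pc) :
    (M.summary lab w (i + 1), M.reachSet lab w (i + 1)) =
      advance (M.matchedRetSucc Ψ (snapshot lab w i) p.1 pc.1
        {ψ | SnapSat (snapshot lab w c) ψ.1} (M.summary lab w i))
        (M.summary lab w c, M.reachSet lab w c) := by
  have hm := matches_of_pendingCalls_eq_cons hi (kindAt_of_getElem? hp hl) hpend
  have hseg : segStart lab w (i + 1) = segStart lab w c := by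
    simp only [segStart, hm.pendingCalls_succ_eq (Nat.zero_le c)]
  refine Prod.ext (Set.ext fun pq => ?_) (Set.ext fun q' => ?_)
  · simp only [summary, advance, hseg, Set.mem_ofPred_eq]
    exact runUpTo_succ_iff_of_matched hΨ hi hpend hp hl hpc (segStart_le c)
  · simp only [reachSet, advance, Set.mem_ofPred_eq,
      runUpTo_succ_iff_of_matched hΨ hi hpend hp hl hpc (Nat.zero_le c)]
    aesop

end Steps


theorem configAt_determinization
    (hΨ : ∀ ψ ∈ M.atomicSet, ψ ∈ Ψ ↔ Clock.predStack ∉ ψ.clocks) {i : ℕ} (hi : i ≤ w.length) :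
    ((M.determinization Ψ lab).configAt w i).1 = (M.summary lab w i, M.reachSet lab w i) ∧
      List.Forall₂ (M.StackEntryAt Ψ lab w) (pendingCalls lab w 0 i)
        ((M.determinization Ψ lab).configAt w i).2 := by
  induction i with
  | zero =>
    refine ⟨Prod.ext (Set.ext fun pq => ?_) (Set.ext fun q => ?_), .nil⟩
    · simp [SnapshotAutomaton.configAt, determinization, summary, segStart, pendingCalls,
        RunUpTo.self_iff, Set.diagonal, eq_comm]
    · simp [SnapshotAutomaton.configAt, determinization, reachSet, RunUpTo.self_iff]
  | succ i ih =>
    obtain ⟨hstate, hstack⟩ := ih (by omega)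
    have hp : w[i]? = some w[i] := List.getElem?_eq_getElem hi
    have hsucc := pendingCalls_succ (lab := lab) (w := w) (Nat.zero_le i)
    rw [kindAt_of_lt hi] at hsucc
    simp only [SnapshotAutomaton.configAt, hp]
    generalize (M.determinization Ψ lab).configAt w i = c at hstate hstack
    obtain ⟨RS, st⟩ := c
    obtain rfl : RS = _ := hstate
    rcases hl : lab w[i].1
    · rw [hl] at hsucc
      simp only [SnapshotAutomaton.next, hl, dite_true, determinization, hsucc, stackUpdate]
      exact ⟨(summary_reachSet_succ_of_call hp hl).symm, .cons ⟨w[i], hp, hl, rfl⟩ hstack⟩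
    · rw [hl] at hsucc
      rw [hsucc]
      rcases hpend : pendingCalls lab w 0 i with _ | ⟨c, ps⟩
      · rw [hpend] at hstack
        obtain rfl := List.forall₂_nil_left_iff.mp hstack
        simp only [SnapshotAutomaton.next, hl, determinization]
        exact ⟨(summary_reachSet_succ_of_unmatched hp hl hpend).symm, .nil⟩
      · rw [hpend] at hstack
        obtain ⟨e, es, ⟨pc, hpc, hcall, rfl⟩, hes, rfl⟩ :=
          List.forall₂_cons_left_iff.mp hstack
        simp only [SnapshotAutomaton.next, hl, determinization]
        exact ⟨(summary_reachSet_succ_of_matched hΨ hi hpend hp hl hpc).symm, hes⟩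
    · rw [hl] at hsucc
      simp only [SnapshotAutomaton.next, hl, determinization, hsucc, stackUpdate]
      exact ⟨(summary_reachSet_succ_of_int hp hl).symm, hstack⟩

theorem accepts_determinization [Finite A]
    (hΨ : ∀ ψ ∈ M.atomicSet, ψ ∈ Ψ ↔ Clock.predStack ∉ ψ.clocks) (ht : IsTimed w) :
    (M.determinization Ψ lab).toECIDPDA.Accepts lab w ↔ M.Accepts lab w := by
  rw [SnapshotAutomaton.accepts_iff _ ht, (configAt_determinization hΨ le_rfl).1]
  simp only [determinization, reachSet, ECIDPDA.Accepts, reach_iff_runUpTo]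
  aesop

end ECIDPDA

end

theorem ecidpda_determinization_no_stack_prediction_general
    {A Q Γ : Type} [Finite A]
    (lab : A → SymbolKind) (M : ECIDPDA A Q Γ)
    (Ψ : Set (ClockConstraint A))
    (hΨ : Ψ = {φ | φ ∈ M.atomicSet ∧ Clock.predStack ∉ φ.clocks}) :
    ∃ B : ECIDPDA A (Set (Q × Q) × Set Q)
        (Set (Q × Q) × Set Q × {a : A // lab a = SymbolKind.call} × Set (↥Ψ)),
      ECIDPDA.Deterministic lab B ∧
      (∀ φ ∈ B.used, Clock.predStack ∉ φ.clocks) ∧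
      (∀ w : List (A × ℝ), IsTimed w →
        (ECIDPDA.Accepts lab B w ↔ ECIDPDA.Accepts lab M w)) := by
  have hΨ' : ∀ ψ ∈ M.atomicSet, ψ ∈ Ψ ↔ Clock.predStack ∉ ψ.clocks := fun ψ hψ => by
    simp [hΨ, hψ]
  exact ⟨(M.determinization Ψ lab).toECIDPDA, SnapshotAutomaton.deterministic _,
    fun _ => SnapshotAutomaton.predStack_not_mem_clocks _,
    fun _ ht => ECIDPDA.accepts_determinization hΨ' ht⟩

/-- **Improved determinization, eliminating the stack prediction
clock.**  Let `M` be a nondeterministic ECIDPDA, let `Ψ₀` be the set of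
atomic stack prediction constraints (those referring to the stack
prediction clock `▷s`) used in its transitions, and let `Ψ` be the set
of all other atomic constraints used in its transitions.  Then there
exists a deterministic ECIDPDA `B` with set of states `2^{Q×Q} × 2^Q`
and pushdown alphabet `2^{Q×Q} × 2^Q × Σ₊₁ × 2^Ψ`, which never uses the
stack prediction clock `▷s` in any of its clock constraints, and which
recognizes the same set of timed strings as `M`. -/
theorem ecidpda_determinization_no_stack_prediction
    {A Q Γ : Type} [Finite A] [Finite Q] [Finite Γ]
    (lab : A → SymbolKind) (M : ECIDPDA A Q Γ) (hfin : M.used.Finite)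
    (Ψ₀ Ψ : Set (ClockConstraint A))
    (hΨ₀ : Ψ₀ = {φ | φ ∈ M.atomicSet ∧ Clock.predStack ∈ φ.clocks})
    (hΨ : Ψ = {φ | φ ∈ M.atomicSet ∧ Clock.predStack ∉ φ.clocks}) :
    ∃ B : ECIDPDA A (Set (Q × Q) × Set Q)
        (Set (Q × Q) × Set Q × {a : A // lab a = SymbolKind.call} × Set (↥Ψ)),
      ECIDPDA.Deterministic lab B ∧
      (∀ φ ∈ B.used, Clock.predStack ∉ φ.clocks) ∧
      (∀ w : List (A × ℝ), IsTimed w →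
        (ECIDPDA.Accepts lab B w ↔ ECIDPDA.Accepts lab M w)) :=
  ecidpda_determinization_no_stack_prediction_general lab M Ψ hΨ
end
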